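/- arXiv:0803.0988 — 10 statements merged into one kernel-verified Lean document; each statement's English description precedes it below -/
import Mathlib

section
/- Let M be an n×n symmetric M-matrix with diagonal entries m_{ii}, let ζ and r be real numbers with 0 < ζ ≤ 1 and 0 < r ≤ 1/4, and let D be a random diagonal n×n matrix whose diagonal entries d_i are chosen independently and uniformly from the interval (0,1). Let T = { i ∈ [n] : (MD·1)_i ≥ r·m_{ii} }, where 1 is the all-ones vector, and let β be the fraction of indices i for which m_{ii} is less than ζ times the average diagonal entry of M. Then with probability at least (1−4r)/(4r+7), |T| ≥ (1/8 − r/2)·(1 − β − 2/(3ζ))·n. -/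
/-!
Write `R_i = ∑_{j ≠ i} |m_ij|`. Testing positive definiteness against the all-ones vector gives
`∑ R_i ≤ tr M`, so by Markov at most a `2/(3ζ)` fraction of the rows have `R_i` above `3ζ/2` times
the average diagonal entry; discarding these and the `β n` rows with small diagonal leaves at least
`(1 - β - 2/(3ζ)) n` good rows, each with `R_i ≤ (3/2) m_ii`. Row `i` fails exactly when
`d_i < r + ∑_{j ≠ i} (|m_ij| / m_ii) d_j`; since `d_i` is uniform and independent of the right-hand
side, whose mean is `r + R_i / (2 m_ii)`, a good row fails with probability at most `r + 3/4`.
Markov's inequality for the number of failing good rows gives the bound.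
-/

open MeasureTheory ProbabilityTheory Matrix Finset

section Uniform

variable {Ω : Type*} [MeasurableSpace Ω] {μ : Measure Ω}

lemma lintegral_ofReal_of_map_eq_uniform {X : Ω → ℝ} (hX : Measurable X)
    (hunif : μ.map X = volume.restrict (Set.Ioo 0 1)) :
    ∫⁻ ω, ENNReal.ofReal (X ω) ∂μ = ENNReal.ofReal (1 / 2) := by
  rw [← lintegral_map ENNReal.measurable_ofReal hX, hunif, ← ofReal_integral_eq_lintegral_ofReal]
  · rw [← integral_Ioc_eq_integral_Ioo, ← intervalIntegral.integral_of_le zero_le_one]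
    simp
  · exact (intervalIntegrable_iff_integrableOn_Ioo_of_le zero_le_one).mp
      intervalIntegral.intervalIntegrable_id
  · filter_upwards [self_mem_ae_restrict measurableSet_Ioo] with x hx using hx.1.le

lemma measure_lt_le_lintegral_of_indepFun [IsFiniteMeasure μ] {X Z : Ω → ℝ} (hX : Measurable X)
    (hZ : Measurable Z) (hXZ : IndepFun X Z μ) (hunif : μ.map X = volume.restrict (Set.Ioo 0 1)) :
    μ {ω | X ω < Z ω} ≤ ∫⁻ ω, ENNReal.ofReal (Z ω) ∂μ := by
  have hs : MeasurableSet {p : ℝ × ℝ | p.2 < p.1} := measurableSet_lt measurable_snd measurable_fst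
  have hslice (z : ℝ) : μ.map X (Prod.mk z ⁻¹' {p : ℝ × ℝ | p.2 < p.1}) ≤ ENNReal.ofReal z := by
    rw [hunif, Measure.restrict_apply' measurableSet_Ioo]
    calc volume (Set.Iio z ∩ Set.Ioo 0 1) ≤ volume (Set.Ioo 0 z) :=
          measure_mono fun x hx => ⟨hx.2.1, hx.1⟩
      _ = ENNReal.ofReal z := by simp
  calc μ {ω | X ω < Z ω} = (μ.map Z).prod (μ.map X) {p | p.2 < p.1} := by
        rw [← (indepFun_iff_map_prod_eq_prod_map_map hZ.aemeasurable hX.aemeasurable).mp hXZ.symm,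
          Measure.map_apply (hZ.prodMk hX) hs]
        rfl
    _ = ∫⁻ z, μ.map X (Prod.mk z ⁻¹' {p | p.2 < p.1}) ∂μ.map Z := Measure.prod_apply hs
    _ ≤ ∫⁻ z, ENNReal.ofReal z ∂μ.map Z := lintegral_mono hslice
    _ = ∫⁻ ω, ENNReal.ofReal (Z ω) ∂μ := lintegral_map ENNReal.measurable_ofReal hZ

variable {ι : Type*} {d : ι → Ω → ℝ}

lemma lintegral_ofReal_sum_mul_le (hd : ∀ j, Measurable (d j))
    (hunif : ∀ j, μ.map (d j) = volume.restrict (Set.Ioo 0 1)) (s : Finset ι) {c : ι → ℝ}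
    (hc : ∀ j ∈ s, 0 ≤ c j) :
    ∫⁻ ω, ENNReal.ofReal (∑ j ∈ s, c j * d j ω) ∂μ ≤ ENNReal.ofReal ((∑ j ∈ s, c j) / 2) :=
  calc ∫⁻ ω, ENNReal.ofReal (∑ j ∈ s, c j * d j ω) ∂μ
      ≤ ∫⁻ ω, ∑ j ∈ s, ENNReal.ofReal (c j * d j ω) ∂μ :=
        lintegral_mono fun ω => le_sum_of_subadditive ENNReal.ofReal ENNReal.ofReal_zero.le
          (fun _ _ => ENNReal.ofReal_add_le) s _
    _ = ∑ j ∈ s, ENNReal.ofReal (c j) * ∫⁻ ω, ENNReal.ofReal (d j ω) ∂μ := by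
        rw [lintegral_finsetSum _ fun j _ => by fun_prop]
        refine sum_congr rfl fun j hj => ?_
        simp_rw [ENNReal.ofReal_mul (hc j hj)]
        exact lintegral_const_mul _ (by fun_prop)
    _ = ENNReal.ofReal ((∑ j ∈ s, c j) / 2) := by
        simp only [lintegral_ofReal_of_map_eq_uniform (hd _) (hunif _)]
        rw [← sum_mul, ← ENNReal.ofReal_sum_of_nonneg hc, ← ENNReal.ofReal_mul (sum_nonneg hc),
          mul_one_div]

lemma measureReal_lt_add_sum_mul_le [IsProbabilityMeasure μ] (hd : ∀ j, Measurable (d j))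
    (hindep : iIndepFun d μ) (hunif : ∀ j, μ.map (d j) = volume.restrict (Set.Ioo 0 1))
    {i : ι} {s : Finset ι} (hi : i ∉ s) {c : ι → ℝ} (hc : ∀ j ∈ s, 0 ≤ c j) {r : ℝ} (hr : 0 ≤ r) :
    μ.real {ω | d i ω < r + ∑ j ∈ s, c j * d j ω} ≤ r + (∑ j ∈ s, c j) / 2 := by
  classical
  have hindep' : IndepFun (d i) (fun ω => r + ∑ j ∈ s, c j * d j ω) μ := by
    have h := (hindep.indepFun_finset {i} s (disjoint_singleton_left.mpr hi) hd).comp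
      (measurable_pi_apply ⟨i, mem_singleton_self i⟩)
      (by fun_prop : Measurable fun v : s → ℝ => r + ∑ j : s, c j * v j)
    convert h using 1
    · rfl
    · funext ω
      rw [Function.comp_apply, Finset.sum_coe_sort s (fun j => c j * d j ω)]
  have hsum : 0 ≤ (∑ j ∈ s, c j) / 2 := div_nonneg (sum_nonneg hc) zero_le_two
  refine ENNReal.toReal_le_of_le_ofReal (add_nonneg hr hsum) ?_
  calc μ {ω | d i ω < r + ∑ j ∈ s, c j * d j ω}
      ≤ ∫⁻ ω, ENNReal.ofReal (r + ∑ j ∈ s, c j * d j ω) ∂μ :=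
        measure_lt_le_lintegral_of_indepFun (hd i) (by fun_prop) hindep' (hunif i)
    _ ≤ ∫⁻ ω, ENNReal.ofReal r + ENNReal.ofReal (∑ j ∈ s, c j * d j ω) ∂μ :=
        lintegral_mono fun ω => ENNReal.ofReal_add_le
    _ = ENNReal.ofReal r + ∫⁻ ω, ENNReal.ofReal (∑ j ∈ s, c j * d j ω) ∂μ :=
        by rw [lintegral_add_left measurable_const, lintegral_const, measure_univ, mul_one]
    _ ≤ ENNReal.ofReal r + ENNReal.ofReal ((∑ j ∈ s, c j) / 2) := by
        gcongr; exact lintegral_ofReal_sum_mul_le hd hunif s hc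
    _ = ENNReal.ofReal (r + (∑ j ∈ s, c j) / 2) :=
        (ENNReal.ofReal_add hr hsum).symm

end Uniform

section Counting

variable {Ω ι : Type*} [MeasurableSpace Ω] {μ : Measure Ω}

lemma card_filter_lt_mul_le_sum {s : Finset ι} {f : ι → ℝ} (hf : ∀ i ∈ s, 0 ≤ f i) (t : ℝ) :
    (#{i ∈ s | t < f i} : ℝ) * t ≤ ∑ i ∈ s, f i :=
  calc (#{i ∈ s | t < f i} : ℝ) * t = ∑ _i ∈ s with t < f _i, t := by
        rw [sum_const, nsmul_eq_mul]
    _ ≤ ∑ i ∈ s with t < f i, f i := sum_le_sum fun i hi => (mem_filter.mp hi).2.le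
    _ ≤ ∑ i ∈ s, f i := sum_le_sum_of_subset_of_nonneg (filter_subset _ s) fun i hi _ => hf i hi

open Classical in
lemma one_sub_div_le_measureReal_le_card_filter_notMem [IsProbabilityMeasure μ] (s : Finset ι)
    {A : ι → Set Ω} (hA : ∀ i ∈ s, MeasurableSet (A i)) {p a : ℝ} (hp : ∀ i ∈ s, μ.real (A i) ≤ p)
    (ha : a < #s) :
    1 - #s * p / (#s - a) ≤ μ.real {ω | a ≤ #{i ∈ s | ω ∉ A i}} := by
  set S := {ω | a ≤ (#{i ∈ s | ω ∉ A i} : ℝ)}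
  set N : Ω → ℝ := fun ω => ∑ i ∈ s, (A i).indicator 1 ω
  have hSc : Sᶜ ⊆ {ω | #s - a ≤ N ω} := fun ω hω => by
    have hsplit := card_filter_add_card_filter_not (s := s) fun i => ω ∈ A i
    have hN : N ω = #{i ∈ s | ω ∈ A i} := by
      simp only [N, Set.indicator_apply, Pi.one_apply, sum_boole]
    simp only [S, Set.mem_compl_iff, Set.mem_ofPred_eq, not_le] at hω ⊢
    rw [hN, ← hsplit] at *
    push_cast at ha ⊢
    linarith
  have hNint : Integrable N μ :=
    integrable_finsetSum s fun i hi => (integrable_const 1).indicator (hA i hi)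
  have hmarkov : μ.real Sᶜ * (#s - a) ≤ #s * p :=
    calc μ.real Sᶜ * (#s - a) ≤ (#s - a) * μ.real {ω | #s - a ≤ N ω} := by
          rw [mul_comm]; exact mul_le_mul_of_nonneg_left (measureReal_mono hSc) (sub_pos.mpr ha).le
      _ ≤ ∫ ω, N ω ∂μ :=
          mul_meas_ge_le_integral_of_nonneg (ae_of_all _ fun ω =>
            sum_nonneg fun i _ => Set.indicator_nonneg (fun _ _ => zero_le_one) _) hNint _
      _ = ∑ i ∈ s, μ.real (A i) := by
          rw [integral_finsetSum _ fun i hi => (integrable_const 1).indicator (hA i hi)]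
          exact sum_congr rfl fun i hi => integral_indicator_one (hA i hi)
      _ ≤ #s * p := by
          simpa using sum_le_sum hp
  have hcover := measureReal_union_le (μ := μ) S Sᶜ
  rw [Set.union_compl_self, probReal_univ] at hcover
  linarith [(le_div_iff₀ (sub_pos.mpr ha)).mpr hmarkov]

end Counting

namespace Matrix

variable {ι : Type*} [Fintype ι] [DecidableEq ι] {M : Matrix ι ι ℝ}

def offDiagRowSum (M : Matrix ι ι ℝ) (i : ι) : ℝ := ∑ j ∈ univ.erase i, -M i j

lemma offDiagRowSum_nonneg (hM : ∀ i j, i ≠ j → M i j ≤ 0) (i : ι) : 0 ≤ offDiagRowSum M i :=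
  sum_nonneg fun j hj => neg_nonneg.mpr (hM i j (ne_of_mem_erase hj).symm)

lemma offDiagRowSum_eq_sub (M : Matrix ι ι ℝ) (i : ι) :
    offDiagRowSum M i = M i i - ∑ j, M i j := by
  rw [offDiagRowSum, ← add_sum_erase _ _ (mem_univ i), sum_neg_distrib]
  ring

lemma PosSemidef.sum_offDiagRowSum_le_trace (hM : M.PosSemidef) :
    ∑ i, offDiagRowSum M i ≤ M.trace := by
  have h := hM.dotProduct_mulVec_nonneg fun _ => 1
  simp only [dotProduct, mulVec, star_trivial, one_mul, mul_one] at h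
  simp only [offDiagRowSum_eq_sub, sum_sub_distrib, trace, diag_apply]
  linarith

lemma le_mul_diagonal_mulVec_one_iff {i : ι} (hi : 0 < M i i) (x : ι → ℝ) (r : ℝ) :
    r * M i i ≤ ((M * diagonal x) *ᵥ fun _ => 1) i ↔
      r + ∑ j ∈ univ.erase i, -M i j / M i i * x j ≤ x i := by
  have hrow : ((M * diagonal x) *ᵥ fun _ => 1) i
      = M i i * (x i - ∑ j ∈ univ.erase i, -M i j / M i i * x j) := by
    rw [mul_sub, mul_sum, mulVec, dotProduct, ← add_sum_erase _ _ (mem_univ i)]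
    simp only [mul_diagonal, mul_one]
    field_simp
    rw [sum_neg_distrib, sub_neg_eq_add]
  rw [hrow, mul_comm r, mul_le_mul_iff_right₀ hi]
  constructor <;> intro h <;> linarith

noncomputable def goodRows (M : Matrix ι ι ℝ) (ζ : ℝ) : Finset ι :=
  {i | ζ * (M.trace / Fintype.card ι) ≤ M i i ∧
    offDiagRowSum M i ≤ 3 * ζ / 2 * (M.trace / Fintype.card ι)}

lemma offDiagRowSum_le_of_mem_goodRows {ζ : ℝ} {i : ι} (hi : i ∈ goodRows M ζ) :
    offDiagRowSum M i ≤ 3 / 2 * M i i := by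
  obtain ⟨-, h₁, h₂⟩ := mem_filter.mp hi
  linarith

lemma PosDef.card_goodRows_ge (hM : M.PosDef) (hoff : ∀ i j, i ≠ j → M i j ≤ 0) {ζ : ℝ}
    (hζ : 0 < ζ) :
    (1 - #{i | M i i < ζ * (M.trace / Fintype.card ι)} / Fintype.card ι - 2 / (3 * ζ)) *
      Fintype.card ι ≤ #(goodRows M ζ) := by
  set m := M.trace / Fintype.card ι
  set n : ℝ := (Fintype.card ι : ℝ)
  rcases isEmpty_or_nonempty ι with _ | _
  · simp [n]
  have hn : 0 < n := by positivity
  have hm : 0 < m := div_pos (sum_pos (fun i _ => hM.diag_pos) univ_nonempty) hn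
  have htrace : M.trace = n * m := (mul_div_cancel₀ M.trace hn.ne').symm
  set bad₁ : Finset ι := {i | M i i < ζ * m}
  set bad₂ : Finset ι := {i | 3 * ζ / 2 * m < offDiagRowSum M i}
  have hbad₂ : (#bad₂ : ℝ) ≤ 2 / (3 * ζ) * n := by
    have hmarkov := card_filter_lt_mul_le_sum (s := univ)
      (fun i _ => offDiagRowSum_nonneg hoff i) (3 * ζ / 2 * m)
    have := hM.posSemidef.sum_offDiagRowSum_le_trace
    rw [div_mul_eq_mul_div, le_div_iff₀ (by positivity)]
    nlinarith
  have hcover : Fintype.card ι ≤ #(goodRows M ζ) + #bad₁ + #bad₂ :=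
    calc Fintype.card ι = #(univ : Finset ι) := card_univ.symm
      _ ≤ #(goodRows M ζ ∪ bad₁ ∪ bad₂) := card_le_card fun i _ => by
          by_contra h
          simp only [goodRows, bad₁, bad₂, m, mem_union, mem_filter, mem_univ, true_and, not_or,
            not_and, not_le, not_lt] at h
          exact (h.1.1 h.1.2).not_ge h.2
      _ ≤ #(goodRows M ζ) + #bad₁ + #bad₂ :=
          (card_union_le _ _).trans (Nat.add_le_add_right (card_union_le _ _) _)
  have hcover' : n ≤ #(goodRows M ζ) + #bad₁ + #bad₂ := by
    simp only [n]; exact_mod_cast hcover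
  have hlhs : (1 - #bad₁ / n - 2 / (3 * ζ)) * n = n - #bad₁ - 2 / (3 * ζ) * n := by
    field_simp
  rw [hlhs]
  linarith

lemma measureReal_lt_add_sum_le_of_mem_goodRows {Ω : Type*} [MeasurableSpace Ω] {μ : Measure Ω}
    [IsProbabilityMeasure μ] (hoff : ∀ i j, i ≠ j → M i j ≤ 0) {d : ι → Ω → ℝ}
    (hd : ∀ j, Measurable (d j)) (hindep : iIndepFun d μ)
    (hunif : ∀ j, μ.map (d j) = volume.restrict (Set.Ioo 0 1)) {ζ r : ℝ} (hr : 0 ≤ r) {i : ι}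
    (hi : i ∈ goodRows M ζ) (hMi : 0 < M i i) :
    μ.real {ω | d i ω < r + ∑ j ∈ univ.erase i, -M i j / M i i * d j ω} ≤ r + 3 / 4 := by
  refine (measureReal_lt_add_sum_mul_le hd hindep hunif (notMem_erase i univ)
    (fun j hj => div_nonneg (neg_nonneg.mpr (hoff i j (ne_of_mem_erase hj).symm)) hMi.le)
    hr).trans ?_
  have hR := (div_le_iff₀ hMi).mpr (offDiagRowSum_le_of_mem_goodRows hi)
  rw [← sum_div]
  change r + offDiagRowSum M i / M i i / 2 ≤ r + 3 / 4
  linarith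

end Matrix

lemma one_sub_four_mul_div_le_one_sub_div {r g a : ℝ} (hr0 : 0 ≤ r) (hg : 0 < g)
    (ha : a ≤ (1 / 8 - r / 2) * g) :
    (1 - 4 * r) / (4 * r + 7) ≤ 1 - g * (r + 3 / 4) / (g - a) := by
  have key : g * (r + 3 / 4) / (g - a) ≤ (6 + 8 * r) / (4 * r + 7) := by
    rw [div_le_div_iff₀ (by nlinarith) (by linarith)]
    nlinarith [mul_le_mul_of_nonneg_left ha (by linarith : (0 : ℝ) ≤ 6 + 8 * r)]
  have : (1 - 4 * r) / (4 * r + 7) = 1 - (6 + 8 * r) / (4 * r + 7) := by field_simp; ring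
  linarith

theorem random_scaling_lemma_general
    {n : ℕ} (M : Matrix (Fin n) (Fin n) ℝ)
    (hMposdef : M.PosDef) (hMoff : ∀ i j : Fin n, i ≠ j → M i j ≤ 0)
    (ζ r : ℝ) (hζ0 : 0 < ζ) (hr0 : 0 < r) (hr : r ≤ 1 / 4)
    {Ω : Type*} [MeasurableSpace Ω] (μ : Measure Ω) [IsProbabilityMeasure μ]
    (d : Fin n → Ω → ℝ) (hd : ∀ i, Measurable (d i))
    (hindep : iIndepFun d μ)
    (hunif : ∀ i, μ.map (d i) = volume.restrict (Set.Ioo (0 : ℝ) 1))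
    (β : ℝ)
    (hβ : β = ((Finset.univ.filter fun i : Fin n =>
        M i i < ζ * ((∑ j, M j j) / n)).card : ℝ) / n) :
    ENNReal.ofReal ((1 - 4 * r) / (4 * r + 7)) ≤
      μ {ω | (1 / 8 - r / 2) * (1 - β - 2 / (3 * ζ)) * n ≤
        ((Finset.univ.filter fun i : Fin n =>
          r * M i i ≤ ((M * Matrix.diagonal fun j => d j ω) *ᵥ fun _ => 1) i).card : ℝ)} := by
  set a := (1 / 8 - r / 2) * (1 - β - 2 / (3 * ζ)) * n
  rw [ENNReal.ofReal_le_iff_le_toReal (measure_ne_top _ _), ← measureReal_def]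
  rcases le_or_gt a 0 with ha | ha
  · calc (1 - 4 * r) / (4 * r + 7) ≤ μ.real Set.univ := by
          rw [probReal_univ, div_le_one (by linarith)]; linarith
      _ ≤ _ := measureReal_mono fun ω _ => ha.trans (Nat.cast_nonneg _)
  set G := goodRows M ζ
  have hG : (1 - β - 2 / (3 * ζ)) * n ≤ #G := by
    simpa [hβ, trace] using hMposdef.card_goodRows_ge hMoff hζ0
  set A : Fin n → Set Ω := fun i => {ω | d i ω < r + ∑ j ∈ univ.erase i, -M i j / M i i * d j ω}
  have hA (i) (hi : i ∈ G) : μ.real (A i) ≤ r + 3 / 4 :=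
    measureReal_lt_add_sum_le_of_mem_goodRows hMoff hd hindep hunif hr0.le hi hMposdef.diag_pos
  have hAmeas (i) (_ : i ∈ G) : MeasurableSet (A i) := measurableSet_lt (hd i) (by fun_prop)
  have haG : a ≤ (1 / 8 - r / 2) * #G := by
    simp only [a, mul_assoc]; exact mul_le_mul_of_nonneg_left hG (by linarith)
  have hGpos : (0 : ℝ) < #G := pos_of_mul_pos_right (ha.trans_le haG) (by linarith)
  refine (one_sub_four_mul_div_le_one_sub_div hr0.le hGpos haG).trans
    ((one_sub_div_le_measureReal_le_card_filter_notMem G hAmeas hA (by nlinarith)).trans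
      (measureReal_mono fun ω hω => (show a ≤ _ from hω).trans ?_))
  exact_mod_cast card_le_card fun i hi => mem_filter.mpr ⟨mem_univ i,
    (le_mul_diagonal_mulVec_one_iff hMposdef.diag_pos (d · ω) r).mpr
      (not_lt.mp (mem_filter.mp hi).2)⟩

/-- **Random Scaling Lemma.** If `M` is an `n × n` symmetric M-matrix (symmetric positive
definite with nonpositive off-diagonal entries) and `D` is a random diagonal matrix whose
diagonal entries are independent and uniform on `(0,1)`, then with probability at least
`(1-4r)/(4r+7)`, the number of rows `i` with `(M D 1)_i ≥ r m_{ii}` is at least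
`(1/8 - r/2)(1 - β - 2/(3ζ)) n`, where `β` is the fraction of diagonal entries of `M` smaller
than `ζ` times the average diagonal entry. -/
theorem random_scaling_lemma
    {n : ℕ} (M : Matrix (Fin n) (Fin n) ℝ)
    (hMposdef : M.PosDef) (hMoff : ∀ i j : Fin n, i ≠ j → M i j ≤ 0)
    (ζ r : ℝ) (hζ0 : 0 < ζ) (hζ1 : ζ ≤ 1) (hr0 : 0 < r) (hr : r ≤ 1 / 4)
    {Ω : Type*} [MeasurableSpace Ω] (μ : Measure Ω) [IsProbabilityMeasure μ]
    (d : Fin n → Ω → ℝ) (hd : ∀ i, Measurable (d i))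
    (hindep : iIndepFun d μ)
    (hunif : ∀ i, μ.map (d i) = volume.restrict (Set.Ioo (0 : ℝ) 1))
    (β : ℝ)
    (hβ : β = ((Finset.univ.filter fun i : Fin n =>
        M i i < ζ * ((∑ j, M j j) / n)).card : ℝ) / n) :
    ENNReal.ofReal ((1 - 4 * r) / (4 * r + 7)) ≤
      μ {ω | (1 / 8 - r / 2) * (1 - β - 2 / (3 * ζ)) * n ≤
        ((Finset.univ.filter fun i : Fin n =>
          r * M i i ≤ ((M * Matrix.diagonal fun j => d j ω) *ᵥ fun _ => 1) i).card : ℝ)} :=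
  random_scaling_lemma_general M hMposdef hMoff ζ r hζ0 hr0 hr μ d hd hindep hunif β hβ
end

section
/- Let A be an n×m real matrix and c ∈ ℝ^m. Suppose (ȳ, s̄) satisfies Aᵀȳ + s̄ = c with all entries of s̄ positive and A·S̄^{-1}1_m = 0, where S̄ = diag(s̄) and 1_m is the all-ones vector (i.e., (ȳ, s̄) is the analytic center of the dual polytope). Then for every (y, s) with Aᵀy + s = c and s ≥ 0 componentwise, we have m·s̄_j ≥ s_j for every coordinate j. -/
/-!
Since `A S̄⁻¹ 1 = 0`, the vector `S̄⁻¹ 1` is orthogonal to the range of `Aᵀ`, so every feasible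
slack `s` has the same pairing with it as `s̄`, namely `∑ⱼ s̄ⱼ / s̄ⱼ = m`. For `s ≥ 0` each term
`sⱼ / s̄ⱼ` of that sum is at most `m`.
-/

open Matrix

section

variable {ι κ R : Type*} [Fintype ι] [Fintype κ]

theorem transpose_mulVec_add_dotProduct_of_mulVec_eq_zero [CommSemiring R]
    {A : Matrix ι κ R} {w : κ → R} (hw : A *ᵥ w = 0) (y : ι → R) (s : κ → R) :
    (Aᵀ *ᵥ y + s) ⬝ᵥ w = s ⬝ᵥ w := by
  rw [add_dotProduct, mulVec_transpose, ← dotProduct_mulVec, hw, dotProduct_zero, zero_add]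

theorem dotProduct_inv_self [DivisionSemiring R] {v : κ → R} (hv : ∀ j, v j ≠ 0) :
    v ⬝ᵥ (fun j => (v j)⁻¹) = Fintype.card κ := by
  simp [dotProduct, mul_inv_cancel₀ (hv _)]

theorem mul_le_dotProduct_of_nonneg [CommSemiring R] [PartialOrder R] [IsOrderedRing R]
    {v w : κ → R} (hv : 0 ≤ v) (hw : 0 ≤ w) (j : κ) : v j * w j ≤ v ⬝ᵥ w :=
  Finset.single_le_sum (f := fun k => v k * w k) (fun k _ => mul_nonneg (hv k) (hw k))
    (Finset.mem_univ j)

end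

/-- If `(ȳ, s̄)` is the analytic center of the dual polytope
`Ω^D = {(y, s) : Aᵀ y + s = c, s ≥ 0}` (i.e. `A S̄⁻¹ 1 = 0`), then for every `(y, s)` in the
polytope, each slack satisfies `s_j ≤ m s̄_j`. -/
theorem analytic_center_slack_bound {n m : ℕ} (A : Matrix (Fin n) (Fin m) ℝ)
    (c : Fin m → ℝ) (ybar : Fin n → ℝ) (sbar : Fin m → ℝ)
    (hfeas : Aᵀ *ᵥ ybar + sbar = c) (hpos : ∀ j, 0 < sbar j)
    (hcenter : A *ᵥ (fun j => (sbar j)⁻¹) = 0) :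
    ∀ (y : Fin n → ℝ) (s : Fin m → ℝ), Aᵀ *ᵥ y + s = c → (∀ j, 0 ≤ s j) →
      ∀ j, s j ≤ m * sbar j := by
  intro y s hfeas' hs j
  have hpair : s ⬝ᵥ (fun k => (sbar k)⁻¹) = m := by
    rw [← transpose_mulVec_add_dotProduct_of_mulVec_eq_zero hcenter y, hfeas', ← hfeas,
      transpose_mulVec_add_dotProduct_of_mulVec_eq_zero hcenter,
      dotProduct_inv_self fun k => (hpos k).ne', Fintype.card_fin]
  have hj : s j * (sbar j)⁻¹ ≤ m :=
    hpair ▸ mul_le_dotProduct_of_nonneg (w := fun k => (sbar k)⁻¹) hs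
      (fun k => (inv_pos.mpr (hpos k)).le) j
  rwa [← div_eq_mul_inv, div_le_iff₀ (hpos j)] at hj
end

section
/- Let A be an n×m real matrix with full row rank, c ∈ ℝ^m, and y ∈ ℝⁿ such that s = c − Aᵀy has all entries positive. Suppose η = η_A(s) satisfies η < 1. Let ε₃ = 1/(20(√m + 1)), and let d_y ∈ ℝⁿ be any vector satisfying ‖d_y + (AS^{-2}Aᵀ)^{-1}AS^{-1}1_m‖_{AS^{-2}Aᵀ} ≤ ε₃·η, where S = diag(s). Define y⁺ = y + (1−ε₃)·d_y and s⁺ = c − Aᵀy⁺. Then (i) all entries of s⁺ are positive, and (ii) η_A(s⁺) ≤ η² + η/20. -/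
open Matrix

open Matrix

/-- Euclidean norm of a vector. -/
noncomputable def eucNorm {ι : Type*} [Fintype ι] (v : ι → ℝ) : ℝ :=
  Real.sqrt (v ⬝ᵥ v)

/-- The diagonal matrix `S⁻¹` with entries `1 / s i`. -/
noncomputable def diagInv {ι : Type*} [Fintype ι] [DecidableEq ι] (s : ι → ℝ) :
    Matrix ι ι ℝ :=
  Matrix.diagonal fun i => (s i)⁻¹

/-- `x_A(s) = S⁻¹ (1 - S⁻¹ Aᵀ (A S⁻² Aᵀ)⁻¹ A S⁻¹ 1)`. -/
noncomputable def xA {n m : ℕ} (A : Matrix (Fin n) (Fin m) ℝ) (s : Fin m → ℝ) :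
    Fin m → ℝ :=
  (diagInv s *ᵥ fun _ => 1) -
    ((diagInv s * diagInv s * Aᵀ * (A * diagInv s * diagInv s * Aᵀ)⁻¹ * A * diagInv s) *ᵥ
      fun _ => 1)

/-- `η_A(s) = ‖S⁻¹ Aᵀ (A S⁻² Aᵀ)⁻¹ A S⁻¹ 1‖`. -/
noncomputable def etaA {κ ι : Type*} [Fintype κ] [Fintype ι] [DecidableEq κ] [DecidableEq ι]
    (B : Matrix κ ι ℝ) (t : ι → ℝ) : ℝ :=
  eucNorm ((diagInv t * Bᵀ * (B * diagInv t * diagInv t * Bᵀ)⁻¹ * B * diagInv t) *ᵥ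
    fun _ => 1)


/-- The matrix norm `‖v‖_M = √(vᵀ M v)`. -/
noncomputable def mnorm {ι : Type*} [Fintype ι] (M : Matrix ι ι ℝ) (v : ι → ℝ) : ℝ :=
  Real.sqrt (v ⬝ᵥ M *ᵥ v)

/-!
Put `B = A S⁻¹`, let `P = Bᵀ (B Bᵀ)⁻¹ B` be the orthogonal projection onto the row space of `B`
and `h = P 1`, so that `η = ‖h‖`. The hypothesis on `d_y` says exactly that
`u = Bᵀ (d_y + (B Bᵀ)⁻¹ B 1)` has `‖u‖ ≤ ε₃ η`, and `S⁻¹ Aᵀ d_y = u - h`; hence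
`s⁺ = s ⊙ d` with `d = 1 + (1 - ε₃)(h - u)`, which is positive because `‖h‖_∞ ≤ η < 1`.

For any `t > 0`, `η_A(t) ≤ ‖1 - w‖` whenever `A T⁻¹ w = 0`, since the projection `P_t` kills `w`
and is a contraction. At `t = s⁺` the vector `w = d ⊙ (1 - h)` qualifies, as
`A (S⁺)⁻¹ w = B (1 - h) = 0`, and
`1 - w = ε₃ h + (1 - ε₃) u + (1 - ε₃) h ⊙ h - (1 - ε₃) u ⊙ h`
has norm at most `η² + 2 ε₃ η ≤ η² + η / 20` once `m ≥ 1` (for `m = 0` everything vanishes).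
-/

variable {κ ι : Type*} [Fintype ι]

lemma eucNorm_eq_norm (v : ι → ℝ) : eucNorm v = ‖WithLp.toLp 2 v‖ := by
  rw [eucNorm, EuclideanSpace.norm_eq]
  congr 1
  simp [dotProduct, sq]

lemma eucNorm_nonneg (v : ι → ℝ) : 0 ≤ eucNorm v :=
  Real.sqrt_nonneg _

lemma abs_le_eucNorm (v : ι → ℝ) (i : ι) : |v i| ≤ eucNorm v := by
  rw [eucNorm_eq_norm]
  exact PiLp.norm_apply_le (WithLp.toLp 2 v) i

lemma eucNorm_add_le (a b : ι → ℝ) : eucNorm (a + b) ≤ eucNorm a + eucNorm b := by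
  simpa only [eucNorm_eq_norm, WithLp.toLp_add] using norm_add_le _ _

lemma eucNorm_sub_le (a b : ι → ℝ) : eucNorm (a - b) ≤ eucNorm a + eucNorm b := by
  simpa only [eucNorm_eq_norm, WithLp.toLp_sub] using norm_sub_le _ _

lemma eucNorm_smul (c : ℝ) (v : ι → ℝ) : eucNorm (c • v) = |c| * eucNorm v := by
  rw [eucNorm_eq_norm, eucNorm_eq_norm, WithLp.toLp_smul, norm_smul, Real.norm_eq_abs]

lemma eucNorm_mul_le (a b : ι → ℝ) : eucNorm (a * b) ≤ eucNorm a * eucNorm b := by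
  have ha : 0 ≤ a ⬝ᵥ a := Finset.sum_nonneg fun i _ => mul_self_nonneg (a i)
  rw [eucNorm, eucNorm, eucNorm, ← Real.sqrt_mul ha]
  refine Real.sqrt_le_sqrt ?_
  simp only [dotProduct, Pi.mul_apply]
  rw [Finset.mul_sum]
  refine Finset.sum_le_sum fun i _ => ?_
  have hai : a i * a i ≤ ∑ j, a j * a j :=
    Finset.single_le_sum (f := fun j => a j * a j) (fun j _ => mul_self_nonneg (a j))
      (Finset.mem_univ i)
  nlinarith [mul_self_nonneg (b i)]

lemma mnorm_mul_transpose [Fintype κ] (B : Matrix κ ι ℝ) (v : κ → ℝ) :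
    mnorm (B * Bᵀ) v = eucNorm (Bᵀ *ᵥ v) := by
  rw [mnorm, eucNorm, ← mulVec_mulVec, dotProduct_mulVec, ← mulVec_transpose]

section rowSpaceProj

variable [Fintype κ] [DecidableEq κ]

/-- The orthogonal projection onto the row space of `B` (junk unless `B * Bᵀ` is invertible). -/
noncomputable def rowSpaceProj (B : Matrix κ ι ℝ) : Matrix ι ι ℝ :=
  Bᵀ * (B * Bᵀ)⁻¹ * B

variable (B : Matrix κ ι ℝ)

lemma rowSpaceProj_transpose : (rowSpaceProj B)ᵀ = rowSpaceProj B := by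
  rw [rowSpaceProj, transpose_mul, transpose_mul, transpose_transpose, transpose_nonsing_inv,
    transpose_mul, transpose_transpose, Matrix.mul_assoc]

variable {B}

lemma mul_rowSpaceProj (hB : IsUnit (B * Bᵀ).det) : B * rowSpaceProj B = B := by
  rw [rowSpaceProj, ← Matrix.mul_assoc, ← Matrix.mul_assoc, mul_nonsing_inv _ hB,
    Matrix.one_mul]

lemma rowSpaceProj_mul_self (hB : IsUnit (B * Bᵀ).det) :
    rowSpaceProj B * rowSpaceProj B = rowSpaceProj B := by
  nth_rw 1 [rowSpaceProj]
  rw [Matrix.mul_assoc, mul_rowSpaceProj hB, rowSpaceProj]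

lemma rowSpaceProj_mulVec_eq_zero {w : ι → ℝ} (hw : B *ᵥ w = 0) :
    rowSpaceProj B *ᵥ w = 0 := by
  rw [rowSpaceProj, ← mulVec_mulVec, hw, mulVec_zero]

lemma eucNorm_rowSpaceProj_mulVec_le (hB : IsUnit (B * Bᵀ).det) (v : ι → ℝ) :
    eucNorm (rowSpaceProj B *ᵥ v) ≤ eucNorm v := by
  set p := rowSpaceProj B *ᵥ v
  have hpp : p ⬝ᵥ p = p ⬝ᵥ v := by
    calc p ⬝ᵥ p = v ᵥ* (rowSpaceProj B)ᵀ ⬝ᵥ p := by rw [vecMul_transpose]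
      _ = v ⬝ᵥ p := by
        rw [rowSpaceProj_transpose, ← dotProduct_mulVec, mulVec_mulVec, rowSpaceProj_mul_self hB]
      _ = p ⬝ᵥ v := dotProduct_comm _ _
  have hres : 0 ≤ (v - p) ⬝ᵥ (v - p) := Finset.sum_nonneg fun i _ => mul_self_nonneg _
  rw [sub_dotProduct, dotProduct_sub, dotProduct_sub, hpp, dotProduct_comm v p] at hres
  exact Real.sqrt_le_sqrt (by linarith)

end rowSpaceProj

lemma Matrix.isUnit_of_rank_eq_card {K n : Type*} [Field K] [Fintype n] [DecidableEq n]
    {M : Matrix n n K} (h : M.rank = Fintype.card n) : IsUnit M := by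
  rw [← mulVec_surjective_iff_isUnit, ← coe_mulVecLin, ← LinearMap.range_eq_top]
  apply Submodule.eq_top_of_finrank_eq
  rw [← rank, h, Module.finrank_fintype_fun_eq_card]

lemma isUnit_det_mul_transpose_of_rank_eq [Fintype κ] [DecidableEq κ] {B : Matrix κ ι ℝ}
    (hB : B.rank = Fintype.card κ) : IsUnit (B * Bᵀ).det :=
  (isUnit_iff_isUnit_det _).mp <| isUnit_of_rank_eq_card <| by rw [rank_self_mul_transpose, hB]

section diagInv

variable [DecidableEq ι] {t : ι → ℝ}

lemma diagInv_mulVec (t v : ι → ℝ) : diagInv t *ᵥ v = t⁻¹ * v := by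
  ext i
  simp [diagInv, mulVec_diagonal]

lemma transpose_diagInv (t : ι → ℝ) : (diagInv t)ᵀ = diagInv t :=
  diagonal_transpose _

lemma rank_mul_diagInv (A : Matrix κ ι ℝ) (ht : ∀ i, t i ≠ 0) :
    (A * diagInv t).rank = A.rank :=
  rank_mul_eq_left_of_det_ne_zero _ _ <| by
    simpa [diagInv, det_diagonal, Finset.prod_ne_zero_iff] using ht

lemma mul_diagInv_mul_diagInv_mul_transpose (A : Matrix κ ι ℝ) (t : ι → ℝ) :
    A * diagInv t * diagInv t * Aᵀ = (A * diagInv t) * (A * diagInv t)ᵀ := by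
  rw [transpose_mul, transpose_diagInv, Matrix.mul_assoc _ (diagInv t)]

end diagInv

section etaA

variable [Fintype κ] [DecidableEq κ] [DecidableEq ι]

lemma etaA_eq_eucNorm_rowSpaceProj (B : Matrix κ ι ℝ) (t : ι → ℝ) :
    etaA B t = eucNorm (rowSpaceProj (B * diagInv t) *ᵥ 1) := by
  rw [etaA, rowSpaceProj, mul_diagInv_mul_diagInv_mul_transpose, transpose_mul,
    transpose_diagInv]
  simp only [Matrix.mul_assoc]
  rfl

lemma etaA_of_isEmpty [IsEmpty ι] (B : Matrix κ ι ℝ) (t : ι → ℝ) : etaA B t = 0 := by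
  simp [etaA, eucNorm]

lemma etaA_le_eucNorm_one_sub {B : Matrix κ ι ℝ} {t w : ι → ℝ}
    (hB : IsUnit ((B * diagInv t) * (B * diagInv t)ᵀ).det) (hw : (B * diagInv t) *ᵥ w = 0) :
    etaA B t ≤ eucNorm (1 - w) := by
  rw [etaA_eq_eucNorm_rowSpaceProj]
  calc eucNorm (rowSpaceProj (B * diagInv t) *ᵥ 1)
      = eucNorm (rowSpaceProj (B * diagInv t) *ᵥ (1 - w)) := by
        rw [mulVec_sub, rowSpaceProj_mulVec_eq_zero hw, sub_zero]
    _ ≤ eucNorm (1 - w) := eucNorm_rowSpaceProj_mulVec_le hB _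

end etaA

lemma mul_transpose_mulVec_mul_diagInv [Fintype κ] [DecidableEq ι] (A : Matrix κ ι ℝ)
    {s : ι → ℝ} (hs : ∀ i, s i ≠ 0) (v : κ → ℝ) :
    s * ((A * diagInv s)ᵀ *ᵥ v) = Aᵀ *ᵥ v := by
  ext i
  rw [transpose_mul, transpose_diagInv, ← mulVec_mulVec, diagInv_mulVec, Pi.mul_apply,
    Pi.mul_apply, Pi.inv_apply, mul_inv_cancel_left₀ (hs i)]

lemma sub_transpose_mulVec_smul_eq_mul [Fintype κ] [DecidableEq κ] [DecidableEq ι]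
    {A B : Matrix κ ι ℝ} {s : ι → ℝ} (hs : ∀ i, s i ≠ 0) (hB : A * diagInv s = B) (r : ℝ)
    (dy : κ → ℝ) :
    s - Aᵀ *ᵥ (r • dy) =
      s * (1 + r • (rowSpaceProj B *ᵥ 1 - Bᵀ *ᵥ (dy + (B * Bᵀ)⁻¹ *ᵥ (B *ᵥ 1)))) := by
  subst hB
  rw [mulVec_smul, ← mul_transpose_mulVec_mul_diagInv A hs dy, mulVec_add, mulVec_mulVec,
    mulVec_mulVec, rowSpaceProj, ← Matrix.mul_assoc]
  ext i
  simp only [Pi.add_apply, Pi.sub_apply, Pi.mul_apply, Pi.one_apply, Pi.smul_apply,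
    smul_eq_mul]
  ring

lemma diagInv_mul_mulVec_mul [DecidableEq ι] {s d : ι → ℝ} (hd : ∀ i, d i ≠ 0) (v : ι → ℝ) :
    diagInv (s * d) *ᵥ (d * v) = diagInv s *ᵥ v := by
  ext i
  simp only [diagInv_mulVec, Pi.mul_apply, Pi.inv_apply, mul_inv]
  rw [mul_assoc, inv_mul_cancel_left₀ (hd i)]

lemma etaA_mul_le [Fintype κ] [DecidableEq κ] [DecidableEq ι] {A : Matrix κ ι ℝ}
    (hA : A.rank = Fintype.card κ) {s d : ι → ℝ} (hs : ∀ i, s i ≠ 0) (hd : ∀ i, d i ≠ 0) :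
    etaA A (s * d) ≤ eucNorm (1 - d * (1 - rowSpaceProj (A * diagInv s) *ᵥ 1)) := by
  have hsd : ∀ i, (s * d) i ≠ 0 := fun i => mul_ne_zero (hs i) (hd i)
  have hgram {t : ι → ℝ} (ht : ∀ i, t i ≠ 0) :
      IsUnit ((A * diagInv t) * (A * diagInv t)ᵀ).det :=
    isUnit_det_mul_transpose_of_rank_eq (by rw [rank_mul_diagInv A ht, hA])
  refine etaA_le_eucNorm_one_sub (hgram hsd) ?_
  rw [← mulVec_mulVec, diagInv_mul_mulVec_mul hd, mulVec_mulVec, mulVec_sub, mulVec_mulVec,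
    mul_rowSpaceProj (hgram hs), sub_self]

lemma one_div_twenty_mul_sqrt_add_one_le {m : ℕ} (hm : 0 < m) :
    1 / (20 * (Real.sqrt m + 1)) ≤ 1 / 40 := by
  have : (1 : ℝ) ≤ Real.sqrt m := Real.one_le_sqrt.mpr (by exact_mod_cast hm)
  rw [div_le_div_iff₀ (by positivity) (by norm_num)]
  linarith

lemma newton_decrement_arith {ε η ν : ℝ} (hε0 : 0 ≤ ε) (hε : ε ≤ 1 / 40) (hη0 : 0 ≤ η)
    (hν : ν ≤ ε * η) :
    ε * η + (1 - ε) * ν + (1 - ε) * η ^ 2 + (1 - ε) * (ν * η) ≤ η ^ 2 + η / 20 := by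
  have hν' := mul_le_mul_of_nonneg_left hν (by linarith : 0 ≤ 1 - ε)
  nlinarith [mul_le_mul_of_nonneg_right hν' hη0, mul_nonneg (sub_nonneg.mpr hε) hη0,
    mul_nonneg (mul_nonneg hε0 hε0) (mul_nonneg hη0 hη0), mul_nonneg (mul_nonneg hε0 hε0) hη0]

section NewtonFactor

variable {h u : ι → ℝ} {ε : ℝ}

lemma one_add_smul_sub_pos {η : ℝ} (hε0 : 0 ≤ ε) (hε1 : ε ≤ 1) (hη1 : η < 1)
    (hh : eucNorm h ≤ η) (hu : eucNorm u ≤ ε * η) (i : ι) :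
    0 < (1 + (1 - ε) • (h - u)) i := by
  have hhi := abs_le.mp ((abs_le_eucNorm h i).trans hh)
  have hui := abs_le.mp ((abs_le_eucNorm u i).trans hu)
  have hη0 : 0 ≤ η := (eucNorm_nonneg h).trans hh
  simp only [Pi.add_apply, Pi.one_apply, Pi.smul_apply, Pi.sub_apply, smul_eq_mul]
  nlinarith [mul_nonneg (sub_nonneg.mpr hε1) (by linarith : 0 ≤ h i + η),
    mul_nonneg (sub_nonneg.mpr hε1) (by linarith : 0 ≤ ε * η - u i), mul_nonneg hε0 hη0]

lemma eucNorm_one_sub_mul_one_sub_le (hε0 : 0 ≤ ε) (hε1 : ε ≤ 1) :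
    eucNorm (1 - (1 + (1 - ε) • (h - u)) * (1 - h)) ≤
      ε * eucNorm h + (1 - ε) * eucNorm u + (1 - ε) * eucNorm h ^ 2 +
        (1 - ε) * (eucNorm u * eucNorm h) := by
  have hexpand : 1 - (1 + (1 - ε) • (h - u)) * (1 - h) =
      ε • h + (1 - ε) • u + (1 - ε) • (h * h) - (1 - ε) • (u * h) := by
    ext i
    simp only [Pi.add_apply, Pi.sub_apply, Pi.mul_apply, Pi.one_apply, Pi.smul_apply,
      smul_eq_mul]
    ring
  have h1ε : |1 - ε| = 1 - ε := abs_of_nonneg (sub_nonneg.mpr hε1)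
  rw [hexpand]
  refine (eucNorm_sub_le _ _).trans ?_
  grw [eucNorm_add_le, eucNorm_add_le, eucNorm_smul, eucNorm_smul, eucNorm_smul, eucNorm_smul,
    eucNorm_mul_le, eucNorm_mul_le, abs_of_nonneg hε0, h1ε, sq]

end NewtonFactor

/-- **Approximate Newton step towards the analytic center.** If `s = c - Aᵀ y > 0`,
`η = η_A(s) < 1`, `ε₃ = 1/(20(√m + 1))`, and `d_y` approximately solves the Newton system in
the sense that `‖d_y + (A S⁻² Aᵀ)⁻¹ A S⁻¹ 1‖_{A S⁻² Aᵀ} ≤ ε₃ η`, then for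
`y⁺ = y + (1 - ε₃) d_y` and `s⁺ = c - Aᵀ y⁺` we have `s⁺ > 0` and
`η_A(s⁺) ≤ η² + η/20`. -/
theorem newton_step {n m : ℕ} (A : Matrix (Fin n) (Fin m) ℝ) (hrank : A.rank = n)
    (c : Fin m → ℝ) (y : Fin n → ℝ) (s : Fin m → ℝ) (hsdef : s = c - Aᵀ *ᵥ y)
    (hs : ∀ i, 0 < s i)
    (η : ℝ) (hη : η = etaA A s) (hη1 : η < 1)
    (ε₃ : ℝ) (hε₃ : ε₃ = 1 / (20 * (Real.sqrt m + 1)))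
    (dy : Fin n → ℝ)
    (hdy : mnorm (A * diagInv s * diagInv s * Aᵀ)
        (dy + (A * diagInv s * diagInv s * Aᵀ)⁻¹ *ᵥ (A *ᵥ (diagInv s *ᵥ fun _ => 1)))
      ≤ ε₃ * η) :
    (∀ i, 0 < (c - Aᵀ *ᵥ (y + (1 - ε₃) • dy)) i) ∧
      etaA A (c - Aᵀ *ᵥ (y + (1 - ε₃) • dy)) ≤ η ^ 2 + η / 20 := by
  rcases Nat.eq_zero_or_pos m with rfl | hm
  · exact ⟨fun i => i.elim0, by simp [etaA_of_isEmpty, hη]⟩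
  have hs0 : ∀ i, s i ≠ 0 := fun i => (hs i).ne'
  have hε₃0 : 0 < ε₃ := by rw [hε₃]; positivity
  have hε₃40 : ε₃ ≤ 1 / 40 := hε₃ ▸ one_div_twenty_mul_sqrt_add_one_le hm
  rw [mul_diagInv_mul_diagInv_mul_transpose, mulVec_mulVec _ A, mnorm_mul_transpose] at hdy
  set B := A * diagInv s with hB
  set h := rowSpaceProj B *ᵥ 1
  set u := Bᵀ *ᵥ (dy + (B * Bᵀ)⁻¹ *ᵥ (B *ᵥ 1))
  replace hdy : eucNorm u ≤ ε₃ * η := hdy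
  have hηh : η = eucNorm h := hη.trans (etaA_eq_eucNorm_rowSpaceProj A s)
  have hstep : c - Aᵀ *ᵥ (y + (1 - ε₃) • dy) = s * (1 + (1 - ε₃) • (h - u)) := by
    rw [mulVec_add, ← sub_sub, ← hsdef]
    exact sub_transpose_mulVec_smul_eq_mul hs0 hB.symm _ _
  have hd := one_add_smul_sub_pos hε₃0.le (by linarith) hη1 hηh.ge hdy
  refine ⟨fun i => hstep ▸ mul_pos (hs i) (hd i), ?_⟩
  rw [hstep]
  calc etaA A (s * (1 + (1 - ε₃) • (h - u)))
      ≤ eucNorm (1 - (1 + (1 - ε₃) • (h - u)) * (1 - h)) :=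
        etaA_mul_le (by rw [hrank, Fintype.card_fin]) hs0 fun i => (hd i).ne'
    _ ≤ ε₃ * η + (1 - ε₃) * eucNorm u + (1 - ε₃) * η ^ 2 + (1 - ε₃) * (eucNorm u * η) :=
        hηh ▸ eucNorm_one_sub_mul_one_sub_le hε₃0.le (by linarith)
    _ ≤ η ^ 2 + η / 20 :=
        newton_decrement_arith hε₃0.le hε₃40 (hηh ▸ eucNorm_nonneg h) hdy
end

section
/- Let A be an n×m real matrix with m ≥ 1, b̂ ∈ ℝⁿ, s ∈ ℝ^m with all entries positive, and ŝ_gap > 0, and let Â = [A, −b̂·1_mᵀ], assumed to have full row rank. Suppose η_{Â}((s, ŝ_gap·1_m)) ≤ 1/40. Let ŝ'_gap = (1 + 1/(10√m))·ŝ_gap. Then η_{Â}((s, ŝ'_gap·1_m)) ≤ 51/400. -/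
open Matrix

open Matrix

/-! `η_B(t)` is the length of the orthogonal projection of `1` onto the row space of `B T⁻¹`,
so `η_B(t) ≤ ‖1 - y‖` for every `y` in the kernel of `B T⁻¹`. If `q` is that projection, the
residual `1 - q` lies in the kernel, and rescaling it coordinatewise by `t' / t` moves it into the
kernel of `B T'⁻¹`; hence `η_B(t') ≤ ‖1 - t' / t‖ + max |t' / t| · η_B(t)`. Raising the gap
coordinates by the factor `1 + δ`, `δ = 1 / (10 √m)`, this gives
`η ≤ √m δ + (1 + δ) / 40 ≤ 1/10 + 11/400 = 51/400`. -/

lemma eucNorm_eq_norm_toLp {ι : Type*} [Fintype ι] (v : ι → ℝ) :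
    eucNorm v = ‖WithLp.toLp 2 v‖ := by
  simp [eucNorm, EuclideanSpace.norm_eq, dotProduct, Real.norm_eq_abs, sq]

lemma dotProduct_eq_inner_toLp {ι : Type*} [Fintype ι] (v w : ι → ℝ) :
    v ⬝ᵥ w = inner ℝ (WithLp.toLp 2 v) (WithLp.toLp 2 w) := by
  simp [dotProduct, PiLp.inner_apply, mul_comm]

lemma eucNorm_add_le_s8 {ι : Type*} [Fintype ι] (u v : ι → ℝ) :
    eucNorm (u + v) ≤ eucNorm u + eucNorm v := by
  simp only [eucNorm_eq_norm_toLp, WithLp.toLp_add]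
  exact norm_add_le _ _

lemma eucNorm_mul_le_of_abs_le {ι : Type*} [Fintype ι] {a : ι → ℝ} {c : ℝ} (hc : 0 ≤ c)
    (ha : ∀ i, |a i| ≤ c) (v : ι → ℝ) :
    eucNorm (a * v) ≤ c * eucNorm v := by
  rw [eucNorm, eucNorm, ← Real.sqrt_sq hc, ← Real.sqrt_mul (sq_nonneg c)]
  apply Real.sqrt_le_sqrt
  rw [dotProduct, dotProduct, Finset.mul_sum]
  refine Finset.sum_le_sum fun i _ => ?_
  have : a i * a i ≤ c ^ 2 := by nlinarith [abs_nonneg (a i), sq_abs (a i), ha i]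
  simp only [Pi.mul_apply]
  nlinarith [mul_le_mul_of_nonneg_right this (mul_self_nonneg (v i))]

lemma eucNorm_sumElim_zero_const {ι κ : Type*} [Fintype ι] [Fintype κ] (a : ℝ) :
    eucNorm (Sum.elim (0 : ι → ℝ) fun _ : κ => a) = √(Fintype.card κ) * |a| := by
  rw [eucNorm, dotProduct, Fintype.sum_sum_type]
  simp [← sq, Real.sqrt_mul (Nat.cast_nonneg _), Real.sqrt_sq_eq_abs]

lemma isUnit_det_of_rank_eq_card {ι : Type*} [Fintype ι] [DecidableEq ι] {A : Matrix ι ι ℝ}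
    (h : A.rank = Fintype.card ι) : IsUnit A.det := by
  rw [← Matrix.isUnit_iff_isUnit_det, ← Matrix.mulVec_injective_iff_isUnit]
  have hsurj : Function.Surjective A.mulVecLin := by
    rw [← LinearMap.range_eq_top]
    apply Submodule.eq_top_of_finrank_eq
    rw [← Matrix.rank, h, Module.finrank_pi]
  exact LinearMap.injective_iff_surjective.mpr hsurj

lemma isUnit_det_mul_diagInv_gram {κ ι : Type*} [Fintype κ] [DecidableEq κ] [Fintype ι]
    [DecidableEq ι] {B : Matrix κ ι ℝ} (hB : B.rank = Fintype.card κ) {t : ι → ℝ}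
    (ht : ∀ i, t i ≠ 0) :
    IsUnit ((B * diagInv t) * (B * diagInv t)ᵀ).det := by
  have hT : IsUnit (diagInv t).det := by
    rw [diagInv, Matrix.det_diagonal, isUnit_iff_ne_zero]
    exact Finset.prod_ne_zero_iff.mpr fun i _ => inv_ne_zero (ht i)
  apply isUnit_det_of_rank_eq_card
  rw [Matrix.rank_self_mul_transpose, Matrix.rank_mul_eq_left_of_isUnit_det _ _ hT, hB]

lemma diagInv_mulVec_ratio_mul {ι : Type*} [Fintype ι] [DecidableEq ι] {t t' : ι → ℝ}
    (ht' : ∀ i, t' i ≠ 0) (r : ι → ℝ) :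
    diagInv t' *ᵥ ((fun i => t' i / t i) * r) = diagInv t *ᵥ r := by
  ext i
  simp only [diagInv, Matrix.mulVec_diagonal, Pi.mul_apply]
  field_simp [ht' i]

/-- The orthogonal projection onto the row space of `M`, provided `M Mᵀ` is invertible. -/
noncomputable def rowProj {κ ι : Type*} [Fintype κ] [DecidableEq κ] [Fintype ι]
    (M : Matrix κ ι ℝ) : Matrix ι ι ℝ :=
  Mᵀ * (M * Mᵀ)⁻¹ * M

section rowProj

variable {κ ι : Type*} [Fintype κ] [DecidableEq κ] [Fintype ι] (M : Matrix κ ι ℝ)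

lemma rowProj_transpose : (rowProj M)ᵀ = rowProj M := by
  rw [rowProj, Matrix.transpose_mul, Matrix.transpose_mul, Matrix.transpose_transpose,
    Matrix.transpose_nonsing_inv, Matrix.transpose_mul, Matrix.transpose_transpose,
    Matrix.mul_assoc]

variable {M}

lemma mul_rowProj (h : IsUnit (M * Mᵀ).det) : M * rowProj M = M := by
  rw [rowProj, Matrix.mul_assoc Mᵀ, ← Matrix.mul_assoc M,
    Matrix.mul_nonsing_inv_cancel_left _ _ h]

lemma rowProj_mul_self (h : IsUnit (M * Mᵀ).det) : rowProj M * rowProj M = rowProj M := by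
  nth_rewrite 1 [rowProj]
  rw [Matrix.mul_assoc, mul_rowProj h, rowProj]

lemma eucNorm_rowProj_mulVec_le (h : IsUnit (M * Mᵀ).det) (x : ι → ℝ) :
    eucNorm (rowProj M *ᵥ x) ≤ eucNorm x := by
  set P := rowProj M
  have hPx : (P *ᵥ x) ⬝ᵥ (P *ᵥ x) = (P *ᵥ x) ⬝ᵥ x := by
    rw [Matrix.dotProduct_mulVec, ← Matrix.mulVec_transpose, rowProj_transpose,
      Matrix.mulVec_mulVec, rowProj_mul_self h]
  have hsq :
      ‖WithLp.toLp 2 (P *ᵥ x)‖ ^ 2 ≤ ‖WithLp.toLp 2 (P *ᵥ x)‖ * ‖WithLp.toLp 2 x‖ := by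
    rw [← real_inner_self_eq_norm_sq, ← dotProduct_eq_inner_toLp, hPx, dotProduct_eq_inner_toLp]
    exact real_inner_le_norm _ _
  rw [eucNorm_eq_norm_toLp, eucNorm_eq_norm_toLp]
  nlinarith [norm_nonneg (WithLp.toLp 2 (P *ᵥ x)), norm_nonneg (WithLp.toLp 2 x)]

lemma eucNorm_rowProj_mulVec_le_of_mulVec_eq_zero (h : IsUnit (M * Mᵀ).det) (x : ι → ℝ) {y : ι → ℝ}
    (hy : M *ᵥ y = 0) :
    eucNorm (rowProj M *ᵥ x) ≤ eucNorm (x - y) := by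
  have hPy : rowProj M *ᵥ y = 0 := by
    rw [rowProj, ← Matrix.mulVec_mulVec, hy, Matrix.mulVec_zero]
  simpa [Matrix.mulVec_sub, hPy] using eucNorm_rowProj_mulVec_le h (x - y)

end rowProj

section etaA

variable {κ ι : Type*} [Fintype κ] [DecidableEq κ] [Fintype ι] [DecidableEq ι]
  {B : Matrix κ ι ℝ}

lemma etaA_nonneg (B : Matrix κ ι ℝ) (t : ι → ℝ) : 0 ≤ etaA B t :=
  Real.sqrt_nonneg _

lemma etaA_eq_eucNorm_rowProj (B : Matrix κ ι ℝ) (t : ι → ℝ) :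
    etaA B t = eucNorm (rowProj (B * diagInv t) *ᵥ 1) := by
  rw [etaA, rowProj]
  congr 2
  simp only [Matrix.transpose_mul, diagInv, Matrix.diagonal_transpose, Matrix.mul_assoc]

lemma etaA_le_of_mulVec_eq_zero (hB : B.rank = Fintype.card κ) {t : ι → ℝ}
    (ht : ∀ i, t i ≠ 0) {y : ι → ℝ} (hy : (B * diagInv t) *ᵥ y = 0) :
    etaA B t ≤ eucNorm (1 - y) := by
  rw [etaA_eq_eucNorm_rowProj]
  exact eucNorm_rowProj_mulVec_le_of_mulVec_eq_zero (isUnit_det_mul_diagInv_gram hB ht) 1 hy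

theorem etaA_le_of_rescale (hB : B.rank = Fintype.card κ) {t t' : ι → ℝ} (ht : ∀ i, t i ≠ 0)
    (ht' : ∀ i, t' i ≠ 0) {c : ℝ} (hc : 0 ≤ c) (hratio : ∀ i, |t' i / t i| ≤ c) :
    etaA B t' ≤ eucNorm (1 - fun i => t' i / t i) + c * etaA B t := by
  set d : ι → ℝ := fun i => t' i / t i
  set q := rowProj (B * diagInv t) *ᵥ 1
  have hresidual : (B * diagInv t) *ᵥ (1 - q) = 0 := by
    rw [Matrix.mulVec_sub, Matrix.mulVec_mulVec, mul_rowProj (isUnit_det_mul_diagInv_gram hB ht),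
      sub_self]
  have hkernel : (B * diagInv t') *ᵥ (d * (1 - q)) = 0 := by
    rw [← Matrix.mulVec_mulVec, diagInv_mulVec_ratio_mul ht', Matrix.mulVec_mulVec, hresidual]
  calc etaA B t' ≤ eucNorm (1 - d * (1 - q)) := etaA_le_of_mulVec_eq_zero hB ht' hkernel
    _ = eucNorm ((1 - d) + d * q) := by congr 1; ring
    _ ≤ eucNorm (1 - d) + eucNorm (d * q) := eucNorm_add_le_s8 _ _
    _ ≤ eucNorm (1 - d) + c * etaA B t := by
        rw [etaA_eq_eucNorm_rowProj]
        gcongr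
        exact eucNorm_mul_le_of_abs_le hc hratio q

lemma etaA_sumElim_scale_gap_le {κ' : Type*} [Fintype κ'] [DecidableEq κ']
    {B : Matrix κ (ι ⊕ κ') ℝ} (hB : B.rank = Fintype.card κ) {s : ι → ℝ} (hs : ∀ i, s i ≠ 0)
    {g : ℝ} (hg : g ≠ 0) {δ : ℝ} (hδ : 0 ≤ δ) :
    etaA B (Sum.elim s fun _ => (1 + δ) * g) ≤
      √(Fintype.card κ') * δ + (1 + δ) * etaA B (Sum.elim s fun _ => g) := by
  have hratio : (fun i : ι ⊕ κ' =>
      Sum.elim s (fun _ => (1 + δ) * g) i / Sum.elim s (fun _ => g) i) =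
        Sum.elim (1 : ι → ℝ) fun _ => 1 + δ := by
    ext (i | i) <;> simp [hs, hg]
  have hgap : (1 : ι ⊕ κ' → ℝ) - Sum.elim (1 : ι → ℝ) (fun _ => 1 + δ) =
      Sum.elim (0 : ι → ℝ) fun _ => -δ := by
    ext (i | i) <;> simp
  have key := etaA_le_of_rescale hB (t := Sum.elim s fun _ => g)
    (t' := Sum.elim s fun _ => (1 + δ) * g) (c := 1 + δ)
    (by rintro (i | i) <;> simp [hs, hg])
    (by rintro (i | i) <;> simp [hs, hg]; positivity) (by positivity)
    (by rintro (i | i) <;> simp [hs, hg, abs_of_nonneg, hδ, add_nonneg])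
  rwa [hratio, hgap, eucNorm_sumElim_zero_const, abs_neg, abs_of_nonneg hδ] at key

end etaA

theorem unshift_eta_bound_general {n m : ℕ} (hm : 1 ≤ m) (s : Fin m → ℝ) (hs : ∀ i, 0 < s i)
    (sgaphat : ℝ) (hsgaphat : 0 < sgaphat)
    (Ahat : Matrix (Fin n) (Fin m ⊕ Fin m) ℝ)
    (hrank : Ahat.rank = n)
    (hη : etaA Ahat (Sum.elim s fun _ => sgaphat) ≤ 1 / 40)
    (sgaphat' : ℝ) (hsgaphat' : sgaphat' = (1 + 1 / (10 * Real.sqrt m)) * sgaphat) :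
    etaA Ahat (Sum.elim s fun _ => sgaphat') ≤ 51 / 400 := by
  have hsqrt : 1 ≤ √(m : ℝ) := Real.one_le_sqrt.mpr (by exact_mod_cast hm)
  set δ := 1 / (10 * √(m : ℝ)) with hδ
  have hδ_le : δ ≤ 1 / 10 := by
    rw [hδ, div_le_div_iff₀ (by positivity) (by norm_num)]
    linarith
  have hgap : √(m : ℝ) * δ = 1 / 10 := by
    rw [hδ]
    field_simp
  have key := etaA_sumElim_scale_gap_le (by rwa [Fintype.card_fin]) (fun i => (hs i).ne')
    hsgaphat.ne' (by positivity : 0 ≤ δ) (B := Ahat)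
  rw [Fintype.card_fin, hgap, ← hsgaphat'] at key
  nlinarith [etaA_nonneg Ahat (Sum.elim s fun _ => sgaphat)]

/-- **Unshifting the objective bound.** If `Â = [A, -b̂ 1ᵀ]` has full row rank and
`η_{Â}((s, ŝ_gap 1)) ≤ 1/40`, then for `ŝ'_gap = (1 + 1/(10√m)) ŝ_gap` we have
`η_{Â}((s, ŝ'_gap 1)) ≤ 51/400`. -/
theorem unshift_eta_bound {n m : ℕ} (hm : 1 ≤ m) (A : Matrix (Fin n) (Fin m) ℝ)
    (bhat : Fin n → ℝ) (s : Fin m → ℝ) (hs : ∀ i, 0 < s i)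
    (sgaphat : ℝ) (hsgaphat : 0 < sgaphat)
    (Ahat : Matrix (Fin n) (Fin m ⊕ Fin m) ℝ)
    (hAhat : Ahat = Matrix.fromCols A (Matrix.of fun i (_ : Fin m) => -bhat i))
    (hrank : Ahat.rank = n)
    (hη : etaA Ahat (Sum.elim s fun _ => sgaphat) ≤ 1 / 40)
    (sgaphat' : ℝ) (hsgaphat' : sgaphat' = (1 + 1 / (10 * Real.sqrt m)) * sgaphat) :
    etaA Ahat (Sum.elim s fun _ => sgaphat') ≤ 51 / 400 :=
  unshift_eta_bound_general hm s hs sgaphat hsgaphat Ahat hrank hη sgaphat' hsgaphat'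
end

section
/- Let A be an n×m real matrix, b ∈ ℝⁿ, c ∈ ℝ^m, and z < z⁺ two real numbers. Suppose (ȳ, s̄, s̄_gap) is the analytic center of Ω^D_{b,z} and (ȳ⁺, s̄⁺, s̄⁺_gap) is the analytic center of Ω^D_{b,z⁺}. Define B = Σ_{j=1}^m log s̄_j + m·log s̄_gap and B⁺ = Σ_{j=1}^m log s̄⁺_j + m·log s̄⁺_gap. Then s̄_gap / s̄⁺_gap ≥ e^{(B − B⁺)/(2m)} − 1. -/
/-!
At an analytic center the gradient of the barrier vanishes along every direction in the
polytope; pairing it with the difference of two feasible slack vectors gives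
`∑ s'ⱼ / s̄ⱼ + m (bᵀy' - z) / s̄_gap = 2m`. Used at the `z`-center against the `z⁺`-center,
it gives `z⁺ - z ≤ 2 s̄_gap`; used at the `z⁺`-center against the `z`-center, it evaluates
`∑ s̄ⱼ / s̄⁺ⱼ`. Weighted AM–GM over the `m` ratios `s̄ⱼ / s̄⁺ⱼ` (weight `1/2m` each) and the gap
ratio `s̄_gap / s̄⁺_gap` (weight `1/2`) then bounds `e^{(B - B⁺)/2m}` by
`1 + (z⁺ - z) / (2 s̄⁺_gap) ≤ 1 + s̄_gap / s̄⁺_gap`.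
-/

open Matrix Real

section AnalyticCenter

variable {ι κ : Type*} [Fintype ι] [Fintype κ] {A : Matrix ι κ ℝ} {b : ι → ℝ} {c : κ → ℝ}
  {z μ g : ℝ} {y y' : ι → ℝ} {s s' : κ → ℝ}

theorem sum_div_add_mul_gap_div_eq_of_center (hfeas : Aᵀ *ᵥ y + s = c)
    (hgap : b ⬝ᵥ y - z = g) (hs : ∀ j, s j ≠ 0) (hg : g ≠ 0)
    (hcenter : A *ᵥ (fun j => (s j)⁻¹) = (μ / g) • b) (hfeas' : Aᵀ *ᵥ y' + s' = c) :
    ∑ j, s' j / s j + μ * ((b ⬝ᵥ y' - z) / g) = Fintype.card κ + μ := by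
  have hslack : s' - s = Aᵀ *ᵥ (y - y') := by
    rw [mulVec_sub, eq_sub_of_add_eq hfeas, eq_sub_of_add_eq hfeas']
    abel
  have hratio : (fun j => (s j)⁻¹) ⬝ᵥ (s' - s) = ∑ j, s' j / s j - Fintype.card κ := by
    simp only [dotProduct, Pi.sub_apply, mul_sub, Finset.sum_sub_distrib, inv_mul_eq_div,
      inv_mul_cancel₀ (hs _), Finset.sum_const, Finset.card_univ, nsmul_eq_mul, mul_one]
  have hcentered : (fun j => (s j)⁻¹) ⬝ᵥ (s' - s) = μ / g * (g + z - b ⬝ᵥ y') := by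
    rw [hslack, dotProduct_mulVec, vecMul_transpose, hcenter, smul_dotProduct, smul_eq_mul,
      dotProduct_sub, ← hgap]
    ring
  rw [hratio] at hcentered
  field_simp at hcentered ⊢
  linarith

theorem mul_gap_le_of_center (hfeas : Aᵀ *ᵥ y + s = c) (hgap : b ⬝ᵥ y - z = g)
    (hs : ∀ j, 0 < s j) (hg : 0 < g) (hcenter : A *ᵥ (fun j => (s j)⁻¹) = (μ / g) • b)
    (hfeas' : Aᵀ *ᵥ y' + s' = c) (hs' : ∀ j, 0 ≤ s' j) :
    μ * (b ⬝ᵥ y' - z) ≤ (Fintype.card κ + μ) * g := by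
  have hidentity := sum_div_add_mul_gap_div_eq_of_center hfeas hgap (fun j => (hs j).ne')
    hg.ne' hcenter hfeas'
  have hsum : 0 ≤ ∑ j, s' j / s j := Finset.sum_nonneg fun j _ => div_nonneg (hs' j) (hs j).le
  rw [← mul_div_assoc] at hidentity
  rw [← div_le_iff₀ hg]
  linarith

end AnalyticCenter

theorem exp_potential_sub_div_le {κ : Type*} [Fintype κ] [Nonempty κ] {s s' : κ → ℝ}
    {g g' : ℝ} (hs : ∀ j, 0 < s j) (hs' : ∀ j, 0 < s' j) (hg : 0 < g) (hg' : 0 < g') :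
    exp (((∑ j, log (s j) + Fintype.card κ * log g) -
        (∑ j, log (s' j) + Fintype.card κ * log g')) / (2 * Fintype.card κ)) ≤
      (∑ j, s j / s' j + Fintype.card κ * (g / g')) / (2 * Fintype.card κ) := by
  set k : ℝ := (Fintype.card κ : ℝ)
  have hk : 0 < k := by positivity
  -- Jensen for `exp` over `Option κ`: `none` carries the gap ratio with weight `1/2`.
  let w : Option κ → ℝ := fun o => o.elim (1 / 2) fun _ => 1 / (2 * k)
  let x : Option κ → ℝ := fun o => o.elim (log g - log g') fun j => log (s j) - log (s' j)
  have hjensen := convexOn_exp.map_sum_le (t := Finset.univ) (w := w) (p := x)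
    (fun o _ => by cases o <;> simp only [w, Option.elim] <;> positivity)
    (by simp only [w, Fintype.sum_option, Option.elim, Finset.sum_const, Finset.card_univ,
      nsmul_eq_mul]; field_simp; ring)
    (fun _ _ => Set.mem_univ _)
  simp only [Fintype.sum_option, w, x, Option.elim, smul_eq_mul, ← Finset.mul_sum, exp_sub,
    exp_log hg, exp_log hg', exp_log (hs _), exp_log (hs' _), Finset.sum_sub_distrib] at hjensen
  refine (congrArg exp ?_).trans_le (hjensen.trans_eq ?_)
  · field_simp
    ring
  · field_simp
    ring

theorem gap_ratio_ge_exp_potential_general {n m : ℕ} (A : Matrix (Fin n) (Fin m) ℝ)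
    (b : Fin n → ℝ) (c : Fin m → ℝ) (z zplus : ℝ)
    -- the analytic center of `Ω^D_{b,z}`
    (ybar : Fin n → ℝ) (sbar : Fin m → ℝ) (sgapbar : ℝ)
    (hbfeas : Aᵀ *ᵥ ybar + sbar = c) (hbgap : b ⬝ᵥ ybar - z = sgapbar)
    (hbs : ∀ j, 0 < sbar j) (hbsgap : 0 < sgapbar)
    (hbcenter : A *ᵥ (fun j => (sbar j)⁻¹) = ((m : ℝ) / sgapbar) • b)
    -- the analytic center of `Ω^D_{b,z⁺}`
    (ybarp : Fin n → ℝ) (sbarp : Fin m → ℝ) (sgapbarp : ℝ)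
    (hpfeas : Aᵀ *ᵥ ybarp + sbarp = c) (hpgap : b ⬝ᵥ ybarp - zplus = sgapbarp)
    (hps : ∀ j, 0 < sbarp j) (hpsgap : 0 < sgapbarp)
    (hpcenter : A *ᵥ (fun j => (sbarp j)⁻¹) = ((m : ℝ) / sgapbarp) • b)
    (B Bplus : ℝ)
    (hB : B = (∑ j, Real.log (sbar j)) + m * Real.log sgapbar)
    (hBplus : Bplus = (∑ j, Real.log (sbarp j)) + m * Real.log sgapbarp) :
    Real.exp ((B - Bplus) / (2 * m)) - 1 ≤ sgapbar / sgapbarp := by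
  rcases Nat.eq_zero_or_pos m with rfl | hm
  · simp only [CharP.cast_eq_zero, mul_zero, div_zero, exp_zero, sub_self]
    positivity
  have : Nonempty (Fin m) := ⟨⟨0, hm⟩⟩
  have hmpos : (0 : ℝ) < m := by positivity
  have hshift : zplus - z ≤ 2 * sgapbar := by
    have hgap_plus := mul_gap_le_of_center hbfeas hbgap hbs hbsgap hbcenter hpfeas
      fun j => (hps j).le
    rw [Fintype.card_fin] at hgap_plus
    have hgap_le : b ⬝ᵥ ybarp - z ≤ 2 * sgapbar :=
      le_of_mul_le_mul_left (by linarith) hmpos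
    linarith
  have hratio : (zplus - z) / sgapbarp ≤ 2 * (sgapbar / sgapbarp) := by
    rw [← mul_div_assoc]
    exact div_le_div_of_nonneg_right hshift hpsgap.le
  have hplus := sum_div_add_mul_gap_div_eq_of_center hpfeas hpgap (fun j => (hps j).ne')
    hpsgap.ne' hpcenter hbfeas
  rw [Fintype.card_fin, show b ⬝ᵥ ybar - zplus = sgapbar - (zplus - z) by linarith,
    sub_div] at hplus
  have hamgm := exp_potential_sub_div_le hbs hps hbsgap hpsgap
  rw [Fintype.card_fin, ← hB, ← hBplus] at hamgm
  calc exp ((B - Bplus) / (2 * m)) - 1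
      ≤ (∑ j, sbar j / sbarp j + m * (sgapbar / sgapbarp)) / (2 * m) - 1 := by linarith
    _ ≤ sgapbar / sgapbarp := by
      rw [sub_le_iff_le_add, div_le_iff₀ (by positivity)]
      nlinarith [mul_le_mul_of_nonneg_left hratio hmpos.le]

/-- **Potential decrease controls the gap slack.** Let `(ȳ, s̄, s̄_gap)` and
`(ȳ⁺, s̄⁺, s̄⁺_gap)` be the analytic centers of `Ω^D_{b,z}` and `Ω^D_{b,z⁺}` with `z < z⁺`,
and let `B, B⁺` be the corresponding potentials. Then
`s̄_gap / s̄⁺_gap ≥ e^{(B - B⁺)/(2m)} - 1`. -/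
theorem gap_ratio_ge_exp_potential {n m : ℕ} (A : Matrix (Fin n) (Fin m) ℝ)
    (b : Fin n → ℝ) (c : Fin m → ℝ) (z zplus : ℝ) (hz : z < zplus)
    -- the analytic center of `Ω^D_{b,z}`
    (ybar : Fin n → ℝ) (sbar : Fin m → ℝ) (sgapbar : ℝ)
    (hbfeas : Aᵀ *ᵥ ybar + sbar = c) (hbgap : b ⬝ᵥ ybar - z = sgapbar)
    (hbs : ∀ j, 0 < sbar j) (hbsgap : 0 < sgapbar)
    (hbcenter : A *ᵥ (fun j => (sbar j)⁻¹) = ((m : ℝ) / sgapbar) • b)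
    -- the analytic center of `Ω^D_{b,z⁺}`
    (ybarp : Fin n → ℝ) (sbarp : Fin m → ℝ) (sgapbarp : ℝ)
    (hpfeas : Aᵀ *ᵥ ybarp + sbarp = c) (hpgap : b ⬝ᵥ ybarp - zplus = sgapbarp)
    (hps : ∀ j, 0 < sbarp j) (hpsgap : 0 < sgapbarp)
    (hpcenter : A *ᵥ (fun j => (sbarp j)⁻¹) = ((m : ℝ) / sgapbarp) • b)
    (B Bplus : ℝ)
    (hB : B = (∑ j, Real.log (sbar j)) + m * Real.log sgapbar)
    (hBplus : Bplus = (∑ j, Real.log (sbarp j)) + m * Real.log sgapbarp) :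
    Real.exp ((B - Bplus) / (2 * m)) - 1 ≤ sgapbar / sgapbarp :=
  gap_ratio_ge_exp_potential_general A b c z zplus ybar sbar sgapbar hbfeas hbgap hbs hbsgap
    hbcenter ybarp sbarp sgapbarp hpfeas hpgap hps hpsgap hpcenter B Bplus hB hBplus
end

section
/- Let U ≥ 1 and K > 0 be real numbers, let A be an (n−2)×m real matrix all of whose entries have absolute value at most U, and let u_t ∈ ℝ^m be a standard basis vector. Suppose y₁ ∈ ℝ^{n−2}, y₂, s₁, s₂, s₃ ∈ ℝ^m, and s₄, s₅ ∈ ℝ^{n−2}, with s₁, s₂, s₃, s₄, s₅ all componentwise nonnegative, satisfy: Aᵀy₁ + y₂ + s₁ = −u_t, y₂ + s₂ = 0, −y₂ + s₃ = K·1_m, y₁ + s₄ = K·1_{n−2}, and −y₁ + s₅ = K·1_{n−2}. Then every coordinate of y₁, y₂, s₁, s₂, s₃, s₄, s₅ has absolute value at most (nU + 1)·K + 1. -/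
/-!
Each pair of constraints `y + s = K`, `-y + s' = K` with nonnegative slacks boxes `y` into
`[-K, K]` and its slacks into `[0, 2K]`; this bounds `y₁`, `y₂`, `s₂`, …, `s₅`. The remaining
slack `s₁ = -u_t - Aᵀy₁ - y₂` is then controlled through `|(Aᵀy₁)_j| ≤ (n - 2)UK`.
-/

open Matrix

theorem abs_le_of_add_eq_of_neg_add_eq {y s s' K : ℝ} (hs : 0 ≤ s) (hs' : 0 ≤ s')
    (h : y + s = K) (h' : -y + s' = K) : |y| ≤ K :=
  abs_le.mpr ⟨by linarith, by linarith⟩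

theorem abs_le_two_mul_of_add_eq {y s K : ℝ} (hs : 0 ≤ s) (hy : |y| ≤ K) (h : y + s = K) :
    |s| ≤ 2 * K := by
  rw [abs_of_nonneg hs]
  linarith [neg_abs_le y]

theorem abs_le_of_add_add_eq {a b s c : ℝ} (h : a + b + s = c) : |s| ≤ |c| + |a| + |b| :=
  calc |s| = |c - a - b| := by rw [← h]; ring_nf
    _ ≤ |c - a| + |b| := abs_sub _ _
    _ ≤ |c| + |a| + |b| := by gcongr; exact abs_sub _ _

theorem abs_transpose_mulVec_apply_le {ι κ : Type*} [Fintype ι] {A : Matrix ι κ ℝ} {y : ι → ℝ}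
    {U K : ℝ} (hA : ∀ i j, |A i j| ≤ U) (hy : ∀ i, |y i| ≤ K) (j : κ) :
    |(Aᵀ *ᵥ y) j| ≤ Fintype.card ι * (U * K) := by
  rw [mulVec_transpose, vecMul, dotProduct]
  calc |∑ i, y i * A i j| ≤ ∑ i, |y i * A i j| := Finset.abs_sum_le_sum_abs _ _
    _ ≤ ∑ _i : ι, U * K := Finset.sum_le_sum fun i _ => by
        rw [abs_mul, mul_comm]
        exact mul_le_mul (hA i j) (hy i) (abs_nonneg _) ((abs_nonneg _).trans (hA i j))
    _ = Fintype.card ι * (U * K) := by simp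

theorem maxflow_dual_bounded_general {n m : ℕ} (hn : 2 ≤ n) (U K : ℝ) (hU : 1 ≤ U) (hK : 0 < K)
    (A : Matrix (Fin (n - 2)) (Fin m) ℝ) (hA : ∀ i j, |A i j| ≤ U)
    (t : Fin m)
    (y₁ : Fin (n - 2) → ℝ) (y₂ : Fin m → ℝ)
    (s₁ s₂ s₃ : Fin m → ℝ) (s₄ s₅ : Fin (n - 2) → ℝ)
    (hs₂ : ∀ j, 0 ≤ s₂ j) (hs₃ : ∀ j, 0 ≤ s₃ j)
    (hs₄ : ∀ i, 0 ≤ s₄ i) (hs₅ : ∀ i, 0 ≤ s₅ i)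
    (e₁ : Aᵀ *ᵥ y₁ + y₂ + s₁ = -Pi.single t 1)
    (e₂ : y₂ + s₂ = 0)
    (e₃ : -y₂ + s₃ = fun _ => K)
    (e₄ : y₁ + s₄ = fun _ => K)
    (e₅ : -y₁ + s₅ = fun _ => K) :
    (∀ i, |y₁ i| ≤ (n * U + 1) * K + 1) ∧ (∀ j, |y₂ j| ≤ (n * U + 1) * K + 1) ∧
      (∀ j, |s₁ j| ≤ (n * U + 1) * K + 1) ∧ (∀ j, |s₂ j| ≤ (n * U + 1) * K + 1) ∧
      (∀ j, |s₃ j| ≤ (n * U + 1) * K + 1) ∧ (∀ i, |s₄ i| ≤ (n * U + 1) * K + 1) ∧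
      (∀ i, |s₅ i| ≤ (n * U + 1) * K + 1) := by
  have hy₁ (i) : |y₁ i| ≤ K :=
    abs_le_of_add_eq_of_neg_add_eq (hs₄ i) (hs₅ i) (congrFun e₄ i) (congrFun e₅ i)
  have e₂' (j) : y₂ j + s₂ j = 0 := congrFun e₂ j
  have hy₂ (j) : |y₂ j| ≤ K :=
    abs_le_of_add_eq_of_neg_add_eq (s := s₂ j + K) (by linarith [hs₂ j]) (hs₃ j)
      (by linarith [e₂' j]) (congrFun e₃ j)
  have hAy₁ := abs_transpose_mulVec_apply_le hA hy₁
  have hnU : 2 ≤ n * U := by nlinarith [show (2 : ℝ) ≤ n by exact_mod_cast hn]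
  have h2K : 2 * K ≤ (n * U + 1) * K + 1 := by nlinarith
  have hs₁_le (j) : |s₁ j| ≤ (n * U + 1) * K + 1 := by
    have hsingle : |(-Pi.single t 1 : Fin m → ℝ) j| ≤ 1 := by
      by_cases h : j = t <;> simp [h]
    have hcard : ((n - 2 : ℕ) : ℝ) * (U * K) ≤ n * (U * K) :=
      mul_le_mul_of_nonneg_right (by exact_mod_cast Nat.sub_le n 2) (by positivity)
    have hs₁_tri := abs_le_of_add_add_eq (congrFun e₁ j)
    simp only [Fintype.card_fin] at hAy₁
    linarith [hAy₁ j, hy₂ j]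
  refine ⟨fun i => (hy₁ i).trans (by linarith), fun j => (hy₂ j).trans (by linarith), hs₁_le,
    fun j => ?_, fun j => ?_, fun i => ?_, fun i => ?_⟩
  · rw [show s₂ j = -y₂ j by linarith [e₂' j], abs_neg]
    linarith [hy₂ j]
  · exact (abs_le_two_mul_of_add_eq (hs₃ j) ((abs_neg _).trans_le (hy₂ j)) (congrFun e₃ j)).trans
      h2K
  · exact (abs_le_two_mul_of_add_eq (hs₄ i) (hy₁ i) (congrFun e₄ i)).trans h2K
  · exact (abs_le_two_mul_of_add_eq (hs₅ i) ((abs_neg _).trans_le (hy₁ i)) (congrFun e₅ i)).trans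
      h2K

/-- **Boundedness of the dual of the modified generalized max-flow LP.** With `K` playing the
role of `4U/ε_FLOW`, every feasible dual point has all coordinates of absolute value at most
`(nU + 1)K + 1`. -/
theorem maxflow_dual_bounded {n m : ℕ} (hn : 2 ≤ n) (U K : ℝ) (hU : 1 ≤ U) (hK : 0 < K)
    (A : Matrix (Fin (n - 2)) (Fin m) ℝ) (hA : ∀ i j, |A i j| ≤ U)
    (t : Fin m)
    (y₁ : Fin (n - 2) → ℝ) (y₂ : Fin m → ℝ)
    (s₁ s₂ s₃ : Fin m → ℝ) (s₄ s₅ : Fin (n - 2) → ℝ)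
    (hs₁ : ∀ j, 0 ≤ s₁ j) (hs₂ : ∀ j, 0 ≤ s₂ j) (hs₃ : ∀ j, 0 ≤ s₃ j)
    (hs₄ : ∀ i, 0 ≤ s₄ i) (hs₅ : ∀ i, 0 ≤ s₅ i)
    (e₁ : Aᵀ *ᵥ y₁ + y₂ + s₁ = -Pi.single t 1)
    (e₂ : y₂ + s₂ = 0)
    (e₃ : -y₂ + s₃ = fun _ => K)
    (e₄ : y₁ + s₄ = fun _ => K)
    (e₅ : -y₁ + s₅ = fun _ => K) :
    (∀ i, |y₁ i| ≤ (n * U + 1) * K + 1) ∧ (∀ j, |y₂ j| ≤ (n * U + 1) * K + 1) ∧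
      (∀ j, |s₁ j| ≤ (n * U + 1) * K + 1) ∧ (∀ j, |s₂ j| ≤ (n * U + 1) * K + 1) ∧
      (∀ j, |s₃ j| ≤ (n * U + 1) * K + 1) ∧ (∀ i, |s₄ i| ≤ (n * U + 1) * K + 1) ∧
      (∀ i, |s₅ i| ≤ (n * U + 1) * K + 1) :=
  maxflow_dual_bounded_general hn U K hU hK A hA t y₁ y₂ s₁ s₂ s₃ s₄ s₅ hs₂ hs₃ hs₄ hs₅ e₁ e₂ e₃ e₄
    e₅
end

section
/- Let m ≥ 1 and U ≥ 1 be integers, let V be a finite nonempty set of vectors in ℝ^m all of whose coordinates are integers in {0, 1, …, U}, and let q ∈ ℝ^m have integer coordinates in {1, …, U}. Let δ₁, …, δ_m be independent random variables, each uniformly distributed on the set {k/(4m²U²) : k = 1, …, 2mU}, and let δ = (δ₁, …, δ_m). Then with probability at least 1/2, both of the following hold: there is a unique vector v* ∈ V minimizing (q+δ)ᵀv over v ∈ V, and this v* also satisfies qᵀv* = min_{v ∈ V} qᵀv. -/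
/-!
A coordinate `i` is ambiguous for a weight vector if two minimizers differ in their `i`-th
coordinate. Fix the perturbations of all coordinates but `i`: raising the weight of `i` pushes
the `i`-th coordinate of every new minimizer below that of every old one, so the largest `i`-th
coordinate of a minimizer strictly decreases along the ambiguous weights. It takes values in
`{0, …, U}` but never `0`, hence at most `U` of the `2mU` weights of `i` are ambiguous, and a
union bound over the `m` coordinates shows that with probability at least `1/2` no coordinate
is ambiguous, i.e. the perturbed minimizer is unique. The total perturbation of a vector of `V`
is at most `1/2`, so it cannot overturn a strict inequality between the integral costs
`q ⬝ᵥ v`.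
-/

open Finset Function

namespace Isolation

variable {ι : Type*} [Fintype ι]

noncomputable def minimizers (c : ι → ℝ) (V : Finset (ι → ℝ)) : Finset (ι → ℝ) :=
  {v ∈ V | ∀ u ∈ V, c ⬝ᵥ v ≤ c ⬝ᵥ u}

noncomputable def minimizerCoords (c : ι → ℝ) (V : Finset (ι → ℝ)) (i : ι) : Finset ℝ :=
  (minimizers c V).image (· i)

def IsAmbiguous (c : ι → ℝ) (V : Finset (ι → ℝ)) (i : ι) : Prop :=
  1 < #(minimizerCoords c V i)

noncomputable instance (c : ι → ℝ) (V : Finset (ι → ℝ)) (i : ι) :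
    Decidable (IsAmbiguous c V i) :=
  inferInstanceAs (Decidable (1 < _))

variable {c : ι → ℝ} {V : Finset (ι → ℝ)}

lemma mem_minimizers {v : ι → ℝ} :
    v ∈ minimizers c V ↔ v ∈ V ∧ ∀ u ∈ V, c ⬝ᵥ v ≤ c ⬝ᵥ u :=
  mem_filter

lemma minimizers_nonempty (c : ι → ℝ) (hV : V.Nonempty) : (minimizers c V).Nonempty := by
  obtain ⟨v, hv, hmin⟩ := V.exists_min_image (c ⬝ᵥ ·) hV
  exact ⟨v, mem_minimizers.2 ⟨hv, hmin⟩⟩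

lemma minimizerCoords_subset {S : Finset ℝ} {i : ι} (hS : ∀ v ∈ V, v i ∈ S) :
    minimizerCoords c V i ⊆ S :=
  image_subset_iff.2 fun v hv => hS v (mem_minimizers.1 hv).1

lemma eq_of_mem_minimizers (h : ∀ i, ¬ IsAmbiguous c V i) {v w : ι → ℝ}
    (hv : v ∈ minimizers c V) (hw : w ∈ minimizers c V) : v = w := by
  by_contra hvw
  obtain ⟨i, hi⟩ := Function.ne_iff.1 hvw
  exact h i (one_lt_card.2 ⟨v i, mem_image_of_mem _ hv, w i, mem_image_of_mem _ hw, hi⟩)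

lemma IsAmbiguous.csSup_mem_and_exists_lt_csSup {i : ι} (h : IsAmbiguous c V i) :
    sSup (minimizerCoords c V i : Set ℝ) ∈ minimizerCoords c V i ∧
      ∃ b ∈ minimizerCoords c V i, b < sSup (minimizerCoords c V i : Set ℝ) := by
  have hne : (minimizerCoords c V i).Nonempty := card_pos.1 (by unfold IsAmbiguous at h; omega)
  rw [hne.csSup_eq_max']
  exact ⟨max'_mem _ _, _, min'_mem _ hne, min'_lt_max'_of_card _ h⟩

section Update

variable [DecidableEq ι]

lemma update_dotProduct (c v : ι → ℝ) (i : ι) (x y : ℝ) :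
    update c i y ⬝ᵥ v = update c i x ⬝ᵥ v + (y - x) * v i := by
  have : update c i y = update c i x + Pi.single i (y - x) := by
    ext j
    by_cases hj : j = i <;> simp [hj]
  rw [this, add_dotProduct, single_dotProduct]

lemma coord_le_of_mem_minimizers_update {i : ι} {x y : ℝ} (hxy : x < y) {v w : ι → ℝ}
    (hv : v ∈ minimizers (update c i y) V) (hw : w ∈ minimizers (update c i x) V) :
    v i ≤ w i := by
  obtain ⟨hvV, hvmin⟩ := mem_minimizers.1 hv
  obtain ⟨hwV, hwmin⟩ := mem_minimizers.1 hw
  have h₁ := hvmin w hwV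
  have h₂ := hwmin v hvV
  rw [update_dotProduct c v i x y, update_dotProduct c w i x y] at h₁
  exact le_of_mul_le_mul_left (by linarith) (sub_pos.2 hxy)

lemma csSup_minimizerCoords_update_lt {i : ι} {x y : ℝ} (hxy : x < y)
    (hx : IsAmbiguous (update c i x) V i) (hy : IsAmbiguous (update c i y) V i) :
    sSup (minimizerCoords (update c i y) V i : Set ℝ) <
      sSup (minimizerCoords (update c i x) V i : Set ℝ) := by
  obtain ⟨hmem, -⟩ := hy.csSup_mem_and_exists_lt_csSup
  obtain ⟨-, b, hb, hlt⟩ := hx.csSup_mem_and_exists_lt_csSup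
  obtain ⟨v, hv, hvi⟩ := mem_image.1 hmem
  obtain ⟨w, hw, rfl⟩ := mem_image.1 hb
  exact hvi ▸ (coord_le_of_mem_minimizers_update hxy hv hw).trans_lt hlt

/-- The largest `i`-th coordinate of a minimizer is injective on the ambiguous weights and never
the least element of `S`. -/
lemma card_isAmbiguous_update_le {α : Type*} [Fintype α] {g : α → ℝ} (hg : Injective g)
    (c : ι → ℝ) {S : Finset ℝ} (i : ι) (hS : ∀ v ∈ V, v i ∈ S) :
    #{t | IsAmbiguous (update c i (g t)) V i} ≤ #S - 1 := by
  set C := fun t => minimizerCoords (update c i (g t)) V i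
  rcases eq_empty_or_nonempty {t | IsAmbiguous (update c i (g t)) V i} with hB | ⟨t₀, ht₀⟩
  · simp [hB]
  have hSne : S.Nonempty :=
    ⟨_, minimizerCoords_subset hS (mem_filter.1 ht₀).2.csSup_mem_and_exists_lt_csSup.1⟩
  rw [← card_erase_of_mem (min'_mem S hSne)]
  refine card_le_card_of_injOn (fun t => sSup (C t : Set ℝ)) (fun t ht => ?_) ?_
  · obtain ⟨hmem, b, hb, hlt⟩ := (mem_filter.1 ht).2.csSup_mem_and_exists_lt_csSup
    refine mem_erase.2 ⟨(lt_of_le_of_lt (min'_le S b ?_) hlt).ne', minimizerCoords_subset hS hmem⟩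
    exact minimizerCoords_subset hS hb
  · intro t ht t' ht' heq
    have ht := (mem_filter.1 ht).2
    have ht' := (mem_filter.1 ht').2
    rcases lt_trichotomy (g t) (g t') with hlt | heq' | hlt
    · exact absurd heq (csSup_minimizerCoords_update_lt hlt ht ht').ne'
    · exact hg heq'
    · exact absurd heq (csSup_minimizerCoords_update_lt hlt ht' ht).ne

/-- Double counting through the involution `(ω, z) ↦ (update ω i z, ω i)`. -/
lemma card_filter_mul_card_le {α : Type*} [Fintype α] (P : (ι → α) → Prop) [DecidablePred P]
    (i : ι) {K : ℕ}
    (h : ∀ ω, #{t | P (update ω i t)} ≤ K) :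
    #{ω | P ω} * Fintype.card α ≤ K * Fintype.card (ι → α) := by
  have hinv : Involutive fun p : (ι → α) × α => (update p.1 i p.2, p.1 i) := by
    rintro ⟨ω, z⟩
    simp
  calc #{ω | P ω} * Fintype.card α = #(({ω | P ω} : Finset (ι → α)) ×ˢ (univ : Finset α)) := by
        rw [card_product, card_univ]
    _ ≤ #{p : (ι → α) × α | P (update p.1 i p.2)} := by
        refine card_le_card_of_injOn _ (fun p hp => ?_) hinv.injective.injOn
        simpa using (mem_product.1 hp).1
    _ = ∑ ω, #{t | P (update ω i t)} := by
        simp only [card_filter, ← univ_product_univ, sum_product]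
    _ ≤ ∑ _ω : ι → α, K := sum_le_sum fun ω _ => h ω
    _ = K * Fintype.card (ι → α) := by rw [sum_const, card_univ, smul_eq_mul, mul_comm]

lemma card_isAmbiguous_mul_card_le {α : Type*} [Fintype α] {g : α → ℝ} (hg : Injective g)
    (q : ι → ℝ) {S : Finset ℝ} (i : ι) (hS : ∀ v ∈ V, v i ∈ S) :
    #{ω : ι → α | IsAmbiguous (q + fun j => g (ω j)) V i} * Fintype.card α ≤
      (#S - 1) * Fintype.card (ι → α) := by
  refine card_filter_mul_card_le _ i fun ω => ?_
  have hupdate : ∀ t, (q + fun j => g (update ω i t j)) =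
      update (q + fun j => g (ω j)) i (q i + g t) := by
    intro t
    ext j
    by_cases hj : j = i <;> simp [hj]
  simp only [hupdate]
  exact card_isAmbiguous_update_le ((add_right_injective (q i)).comp hg) _ i hS

lemma two_mul_card_exists_isAmbiguous_le {α : Type*} [Fintype α] [Nonempty α] {g : α → ℝ}
    (hg : Injective g) (q : ι → ℝ) {S : Finset ℝ} (hS : ∀ v ∈ V, ∀ i, v i ∈ S)
    (hα : 2 * (Fintype.card ι * (#S - 1)) ≤ Fintype.card α) :
    2 * #{ω : ι → α | ∃ i, IsAmbiguous (q + fun j => g (ω j)) V i} ≤ Fintype.card (ι → α) := by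
  classical
  have hunion : ({ω | ∃ i, IsAmbiguous (q + fun j => g (ω j)) V i} : Finset (ι → α)) ⊆
      univ.biUnion fun i => {ω | IsAmbiguous (q + fun j => g (ω j)) V i} := by
    intro ω hω
    simpa using hω
  refine Nat.le_of_mul_le_mul_right ?_ (Fintype.card_pos (α := α))
  calc 2 * #{ω : ι → α | ∃ i, IsAmbiguous (q + fun j => g (ω j)) V i} * Fintype.card α
      ≤ 2 * ((∑ i, #{ω : ι → α | IsAmbiguous (q + fun j => g (ω j)) V i}) * Fintype.card α) := by
        rw [Nat.mul_assoc]
        exact Nat.mul_le_mul_left _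
          (Nat.mul_le_mul_right _ ((card_le_card hunion).trans card_biUnion_le))
    _ ≤ 2 * ∑ _i : ι, (#S - 1) * Fintype.card (ι → α) := by
        rw [sum_mul]
        exact Nat.mul_le_mul_left _
          (sum_le_sum fun i _ => card_isAmbiguous_mul_card_le hg q i fun v hv => hS v hv i)
    _ = 2 * (Fintype.card ι * (#S - 1)) * Fintype.card (ι → α) := by
        rw [sum_const, card_univ, smul_eq_mul]; ring
    _ ≤ Fintype.card α * Fintype.card (ι → α) := Nat.mul_le_mul_right _ hα
    _ = Fintype.card (ι → α) * Fintype.card α := Nat.mul_comm _ _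

end Update

lemma minimizers_add_subset {q p : ι → ℝ} (hq : ∀ v ∈ V, ∃ n : ℤ, q ⬝ᵥ v = n)
    (hp : ∀ v ∈ V, ∀ w ∈ V, p ⬝ᵥ v < p ⬝ᵥ w + 1) : minimizers (q + p) V ⊆ minimizers q V := by
  intro v hv
  obtain ⟨hvV, hmin⟩ := mem_minimizers.1 hv
  refine mem_minimizers.2 ⟨hvV, fun u hu => ?_⟩
  have hlt : q ⬝ᵥ v < q ⬝ᵥ u + 1 := by
    have := hmin u hu
    rw [add_dotProduct, add_dotProduct] at this
    linarith [hp u hu v hvV]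
  obtain ⟨a, ha⟩ := hq v hvV
  obtain ⟨b, hb⟩ := hq u hu
  rw [ha, hb] at hlt ⊢
  exact_mod_cast Int.lt_add_one_iff.1 (by exact_mod_cast hlt)

lemma exists_unique_minimizer_of_forall_not_isAmbiguous {q p : ι → ℝ} (hV : V.Nonempty)
    (hq : ∀ v ∈ V, ∃ n : ℤ, q ⬝ᵥ v = n) (hp : ∀ v ∈ V, ∀ w ∈ V, p ⬝ᵥ v < p ⬝ᵥ w + 1)
    (h : ∀ i, ¬ IsAmbiguous (q + p) V i) :
    ∃ v₀ ∈ V, (∀ v ∈ V, v ≠ v₀ → (q + p) ⬝ᵥ v₀ < (q + p) ⬝ᵥ v) ∧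
      ∀ v ∈ V, q ⬝ᵥ v₀ ≤ q ⬝ᵥ v := by
  obtain ⟨v₀, hv₀⟩ := minimizers_nonempty (q + p) hV
  obtain ⟨hv₀V, hmin⟩ := mem_minimizers.1 hv₀
  refine ⟨v₀, hv₀V, fun v hv hne => (hmin v hv).lt_of_ne fun heq => hne ?_,
    (mem_minimizers.1 (minimizers_add_subset hq hp hv₀)).2⟩
  refine eq_of_mem_minimizers h (mem_minimizers.2 ⟨hv, fun u hu => ?_⟩) hv₀
  exact heq ▸ hmin u hu

lemma dotProduct_lt_dotProduct_add_one {p v w : ι → ℝ} {a b : ℝ}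
    (hp : ∀ j, 0 ≤ p j ∧ p j ≤ a) (hv : ∀ j, 0 ≤ v j ∧ v j ≤ b) (hw : ∀ j, 0 ≤ w j)
    (hab : Fintype.card ι * (a * b) < 1) : p ⬝ᵥ v < p ⬝ᵥ w + 1 := by
  have hv_le : p ⬝ᵥ v ≤ Fintype.card ι * (a * b) := by
    simpa [dotProduct] using sum_le_card_nsmul univ (fun j => p j * v j) (a * b) fun j _ =>
      mul_le_mul (hp j).2 (hv j).2 (hv j).1 ((hp j).1.trans (hp j).2)
  have hw_nonneg : 0 ≤ p ⬝ᵥ w := dotProduct_nonneg_of_nonneg (fun j => (hp j).1) hw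
  linarith

lemma exists_int_dotProduct_eq {q v : ι → ℝ} (hq : ∀ j, ∃ n : ℤ, q j = n)
    (hv : ∀ j, ∃ n : ℤ, v j = n) : ∃ n : ℤ, q ⬝ᵥ v = n := by
  choose a ha using hq
  choose b hb using hv
  exact ⟨∑ j, a j * b j, by simp [dotProduct, ha, hb]⟩

end Isolation

lemma PMF.one_half_le_toMeasure_uniformOfFinset_univ_compl {Ω : Type*} [Fintype Ω]
    [MeasurableSpace Ω] [MeasurableSingletonClass Ω] (h : (univ : Finset Ω).Nonempty)
    {B : Finset Ω} (hB : 2 * #B ≤ Fintype.card Ω) :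
    1 / 2 ≤ (uniformOfFinset univ h).toMeasure (↑B)ᶜ := by
  classical
  rw [toMeasure_uniformOfFinset_apply _ _ (B : Set Ω)ᶜ.toFinite.measurableSet, card_univ,
    ENNReal.le_div_iff_mul_le (Or.inl (by simpa using h.card_pos.ne')) (Or.inl (by simp))]
  simp only [Set.mem_compl_iff, mem_coe, filter_not, filter_mem_eq_inter, univ_inter,
    ← compl_eq_univ_sdiff, card_compl]
  have hle : (Fintype.card Ω : ENNReal) ≤ 2 * ↑(Fintype.card Ω - #B) := by
    exact_mod_cast (by omega)
  calc 1 / 2 * (Fintype.card Ω : ENNReal) ≤ 1 / 2 * (2 * ↑(Fintype.card Ω - #B)) := by gcongr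
    _ = ↑(Fintype.card Ω - #B) := by
        rw [← mul_assoc, one_div, ENNReal.inv_mul_cancel two_ne_zero ENNReal.ofNat_ne_top,
          one_mul]

open Isolation in
/-- **Isolation of a minimum-cost vertex by random perturbation.** Let `V` be a nonempty
finite set of vectors in `ℝ^m` with integer coordinates in `{0, …, U}` and `q` an integer
cost vector with coordinates in `{1, …, U}`. Perturb each cost independently by a value
uniform on `{k/(4m²U²) : k = 1, …, 2mU}` (modelled here by the uniform measure on
`Fin m → Fin (2mU)`). Then with probability at least `1/2` there is a unique vector of `V`
minimizing the perturbed cost, and it also minimizes the original cost. -/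
theorem perturbed_costs_isolate {m U : ℕ} (hm : 1 ≤ m) (hU : 1 ≤ U)
    (V : Finset (Fin m → ℝ)) (hV : V.Nonempty)
    (hVint : ∀ v ∈ V, ∀ i, ∃ k : ℕ, k ≤ U ∧ v i = (k : ℝ))
    (q : Fin m → ℝ) (hq : ∀ i, ∃ k : ℕ, 1 ≤ k ∧ k ≤ U ∧ q i = (k : ℝ)) :
    (1 / 2 : ENNReal) ≤
      (PMF.uniformOfFinset (Finset.univ : Finset (Fin m → Fin (2 * m * U)))
          ⟨fun _ => ⟨0, Nat.mul_pos (Nat.mul_pos Nat.zero_lt_two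
              (Nat.lt_of_lt_of_le Nat.zero_lt_one hm))
            (Nat.lt_of_lt_of_le Nat.zero_lt_one hU)⟩, Finset.mem_univ _⟩).toMeasure
        {ω | ∃ v₀ ∈ V,
          (∀ v ∈ V, v ≠ v₀ →
            ((q + fun i => (((ω i : ℕ) : ℝ) + 1) / (4 * m ^ 2 * U ^ 2)) ⬝ᵥ v₀ <
              (q + fun i => (((ω i : ℕ) : ℝ) + 1) / (4 * m ^ 2 * U ^ 2)) ⬝ᵥ v)) ∧
          (∀ v ∈ V, q ⬝ᵥ v₀ ≤ q ⬝ᵥ v)} := by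
  set N := 2 * m * U
  set D : ℝ := 4 * m ^ 2 * U ^ 2
  set g : Fin N → ℝ := fun t => ((t : ℕ) + 1) / D
  have hD : 0 < D := by positivity
  have hg : Injective g := fun t t' h => Fin.ext (by simpa [g, hD.ne'] using h)
  set S : Finset ℝ := (range (U + 1)).image Nat.cast
  have hS : ∀ v ∈ V, ∀ i, v i ∈ S := fun v hv i => by
    obtain ⟨k, hk, hvk⟩ := hVint v hv i
    exact mem_image.2 ⟨k, mem_range.2 (by omega), hvk.symm⟩
  have hqint : ∀ v ∈ V, ∃ n : ℤ, q ⬝ᵥ v = n := fun v hv => exists_int_dotProduct_eq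
    (fun i => (hq i).elim fun k hk => ⟨k, by simp [hk.2.2]⟩)
    fun i => (hVint v hv i).elim fun k hk => ⟨k, by simp [hk.2]⟩
  have hcoord : ∀ v ∈ V, ∀ j, 0 ≤ v j ∧ v j ≤ U := fun v hv j => by
    obtain ⟨k, hk, hvk⟩ := hVint v hv j
    exact ⟨hvk ▸ k.cast_nonneg, by rw [hvk]; exact_mod_cast hk⟩
  have hsmall : ∀ ω : Fin m → Fin N, ∀ v ∈ V, ∀ w ∈ V,
      (fun j => g (ω j)) ⬝ᵥ v < (fun j => g (ω j)) ⬝ᵥ w + 1 := by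
    refine fun ω v hv w hw => dotProduct_lt_dotProduct_add_one (a := N / D) (fun j =>
      ⟨by positivity, div_le_div_of_nonneg_right (by exact_mod_cast (ω j).isLt) hD.le⟩)
      (hcoord v hv) (fun j => (hcoord w hw j).1) ?_
    have hhalf : (m : ℝ) * (N / D * U) = 1 / 2 := by
      simp only [N, D]; push_cast; field_simp; ring
    rw [Fintype.card_fin, hhalf]
    norm_num
  have hNpos : 0 < N := by positivity
  have : Nonempty (Fin N) := ⟨⟨0, hNpos⟩⟩
  have hcount := two_mul_card_exists_isAmbiguous_le hg q hS (by
    have hSU : #S ≤ U + 1 := card_image_le.trans_eq (card_range _)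
    simp only [Fintype.card_fin, N]
    nlinarith [show #S - 1 ≤ U by omega])
  refine (PMF.one_half_le_toMeasure_uniformOfFinset_univ_compl _ hcount).trans
    (MeasureTheory.measure_mono fun ω hω => ?_)
  refine exists_unique_minimizer_of_forall_not_isAmbiguous hV hqint (hsmall ω) ?_
  simpa using hω
end

section
/- For all vectors v, w ∈ ℝ^m and every symmetric positive definite m×m real matrix M: ‖w‖_{M + vvᵀ} ≤ ‖w‖_M · (1 + vᵀM^{-1}v)^{1/2}. -/
open Matrix

/-! Writing `u = M⁻¹ v`, one has `vᵀ w = ⟪u, w⟫_M` and `vᵀ M⁻¹ v = ⟪u, u⟫_M`, so Cauchy–Schwarz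
for the inner product `⟪x, y⟫_M = xᵀ M y` gives `(vᵀ w)² ≤ ‖w‖_M² · vᵀ M⁻¹ v`. Adding
`‖w‖_M²` to both sides yields `wᵀ (M + vvᵀ) w = ‖w‖_M² + (vᵀ w)² ≤ ‖w‖_M² (1 + vᵀ M⁻¹ v)`. -/

namespace Matrix

variable {ι : Type*} [Fintype ι]

theorem PosSemidef.dotProduct_mulVec_sq_le {M : Matrix ι ι ℝ} (hM : M.PosSemidef) (x y : ι → ℝ) :
    (x ⬝ᵥ M *ᵥ y) ^ 2 ≤ (x ⬝ᵥ M *ᵥ x) * (y ⬝ᵥ M *ᵥ y) := by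
  let _ := M.toSeminormedAddCommGroup hM
  let _ := M.toInnerProductSpace hM
  have inner_eq (a b : ι → ℝ) : (inner ℝ a b : ℝ) = a ⬝ᵥ M *ᵥ b := by
    change (M *ᵥ b) ⬝ᵥ star a = _
    rw [star_trivial, dotProduct_comm]
  simpa only [inner_eq, sq] using real_inner_mul_inner_self_le x y

theorem PosDef.dotProduct_sq_le [DecidableEq ι] {M : Matrix ι ι ℝ} (hM : M.PosDef) (v w : ι → ℝ) :
    (v ⬝ᵥ w) ^ 2 ≤ (w ⬝ᵥ M *ᵥ w) * (v ⬝ᵥ M⁻¹ *ᵥ v) := by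
  have hMinv : M *ᵥ (M⁻¹ *ᵥ v) = v := by
    rw [mulVec_mulVec, mul_nonsing_inv M ((isUnit_iff_isUnit_det M).mp hM.isUnit), one_mulVec]
  have := hM.posSemidef.dotProduct_mulVec_sq_le w (M⁻¹ *ᵥ v)
  rwa [hMinv, dotProduct_comm (M⁻¹ *ᵥ v), dotProduct_comm w] at this

theorem dotProduct_add_vecMulVec_mulVec (M : Matrix ι ι ℝ) (v w : ι → ℝ) :
    w ⬝ᵥ (M + vecMulVec v v) *ᵥ w = w ⬝ᵥ M *ᵥ w + (v ⬝ᵥ w) ^ 2 := by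
  rw [add_mulVec, dotProduct_add, vecMulVec_mulVec, op_smul_eq_smul, dotProduct_smul,
    smul_eq_mul, dotProduct_comm w v, sq]

end Matrix

/-- For every symmetric positive definite `M` and vectors `v, w`:
`‖w‖_{M + vvᵀ} ≤ ‖w‖_M (1 + vᵀ M⁻¹ v)^{1/2}`. -/
theorem mnorm_rank_one_update_le {m : ℕ} (M : Matrix (Fin m) (Fin m) ℝ)
    (hM : M.PosDef) (v w : Fin m → ℝ) :
    mnorm (M + Matrix.vecMulVec v v) w ≤
      mnorm M w * Real.sqrt (1 + v ⬝ᵥ M⁻¹ *ᵥ v) := by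
  have hwMw : 0 ≤ w ⬝ᵥ M *ᵥ w := hM.posSemidef.dotProduct_mulVec_nonneg w
  rw [mnorm, mnorm, ← Real.sqrt_mul hwMw, dotProduct_add_vecMulVec_mulVec]
  apply Real.sqrt_le_sqrt
  linarith [hM.dotProduct_sq_le v w]
end

section
/- For all vectors v, w ∈ ℝ^m and every symmetric positive definite m×m real matrix M: ‖w‖_{(M + vvᵀ)^{-1}} ≥ ‖w‖_{M^{-1}} · (1 + vᵀM^{-1}v)^{-1/2}. -/
open Matrix

/-! By Sherman–Morrison, with `P = M⁻¹` and `c = vᵀPv`,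
`wᵀ(M + vvᵀ)⁻¹w = wᵀPw - (vᵀPw)² / (1 + c)`. Cauchy–Schwarz for the semi-inner product
`(x, y) ↦ xᵀPy` bounds `(vᵀPw)²` by `c · wᵀPw`, so the right-hand side is at least
`wᵀPw / (1 + c)`; taking square roots gives the claim. -/

namespace Matrix

section ShermanMorrison

variable {n α : Type*} [Fintype n] [DecidableEq n] [Field α]

theorem inv_add_vecMulVec {A : Matrix n n α} (hA : IsUnit A) (u v : n → α)
    (h : 1 + v ⬝ᵥ A⁻¹ *ᵥ u ≠ 0) :
    (A + vecMulVec u v)⁻¹ =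
      A⁻¹ - (1 + v ⬝ᵥ A⁻¹ *ᵥ u)⁻¹ • vecMulVec (A⁻¹ *ᵥ u) (v ᵥ* A⁻¹) := by
  have hAA : A * A⁻¹ = 1 := mul_nonsing_inv A ((isUnit_iff_isUnit_det A).mp hA)
  refine inv_eq_right_inv ?_
  rw [add_mul, mul_sub, mul_sub, hAA, mul_smul_comm, mul_smul_comm, mul_vecMulVec,
    mulVec_mulVec, hAA, one_mulVec, vecMulVec_mul_vecMulVec, vecMulVec_smul, smul_smul,
    vecMulVec_mul]
  have hs : (1 + v ⬝ᵥ A⁻¹ *ᵥ u)⁻¹ * (1 + v ⬝ᵥ A⁻¹ *ᵥ u) = 1 := inv_mul_cancel₀ h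
  linear_combination (norm := module) (-hs) • vecMulVec u (v ᵥ* A⁻¹)

theorem dotProduct_inv_add_vecMulVec_mulVec {A : Matrix n n α} (hA : IsUnit A)
    (u v w x : n → α) (h : 1 + v ⬝ᵥ A⁻¹ *ᵥ u ≠ 0) :
    w ⬝ᵥ (A + vecMulVec u v)⁻¹ *ᵥ x =
      w ⬝ᵥ A⁻¹ *ᵥ x - (w ⬝ᵥ A⁻¹ *ᵥ u) * (v ⬝ᵥ A⁻¹ *ᵥ x) / (1 + v ⬝ᵥ A⁻¹ *ᵥ u) := by
  rw [inv_add_vecMulVec hA u v h, sub_mulVec, smul_mulVec, vecMulVec_mulVec, dotProduct_sub,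
    dotProduct_smul, dotProduct_smul, ← dotProduct_mulVec]
  simp only [op_smul_eq_smul, smul_eq_mul]
  ring

end ShermanMorrison

variable {n : Type*} [Fintype n]

theorem PosSemidef.dotProduct_mulVec_sq_le_s16 {P : Matrix n n ℝ} (hP : P.PosSemidef)
    (v w : n → ℝ) : (v ⬝ᵥ P *ᵥ w) ^ 2 ≤ (v ⬝ᵥ P *ᵥ v) * (w ⬝ᵥ P *ᵥ w) := by
  let := P.toSeminormedAddCommGroup hP
  let := P.toInnerProductSpace hP
  have inner_eq (x y : n → ℝ) : inner ℝ x y = x ⬝ᵥ P *ᵥ y := by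
    change (P *ᵥ y) ⬝ᵥ star x = _
    rw [star_trivial, dotProduct_comm]
  simpa only [sq, inner_eq] using real_inner_mul_inner_self_le v w

theorem IsHermitian.dotProduct_mulVec_comm {P : Matrix n n ℝ} (hP : P.IsHermitian)
    (v w : n → ℝ) : w ⬝ᵥ P *ᵥ v = v ⬝ᵥ P *ᵥ w := by
  rw [dotProduct_comm, ← vecMul_transpose, ← conjTranspose_eq_transpose_of_trivial, hP.eq,
    dotProduct_mulVec]

theorem PosDef.dotProduct_inv_mulVec_div_le [DecidableEq n] {M : Matrix n n ℝ}
    (hM : M.PosDef) (v w : n → ℝ) :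
    w ⬝ᵥ M⁻¹ *ᵥ w / (1 + v ⬝ᵥ M⁻¹ *ᵥ v) ≤ w ⬝ᵥ (M + vecMulVec v v)⁻¹ *ᵥ w := by
  have hP := hM.inv.posSemidef
  have hc : 0 ≤ v ⬝ᵥ M⁻¹ *ᵥ v := by simpa using hP.dotProduct_mulVec_nonneg v
  have hq : 0 ≤ w ⬝ᵥ M⁻¹ *ᵥ w := by simpa using hP.dotProduct_mulVec_nonneg w
  have hCS := hP.dotProduct_mulVec_sq_le_s16 v w
  rw [dotProduct_inv_add_vecMulVec_mulVec hM.isUnit v v w w (by positivity),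
    hP.isHermitian.dotProduct_mulVec_comm v w, le_sub_iff_add_le, ← add_div,
    div_le_iff₀ (by positivity)]
  linarith

end Matrix

/-- For every symmetric positive definite `M` and vectors `v, w`:
`‖w‖_{(M + vvᵀ)⁻¹} ≥ ‖w‖_{M⁻¹} (1 + vᵀ M⁻¹ v)^{-1/2}`. -/
theorem mnorm_inv_rank_one_update_ge {m : ℕ} (M : Matrix (Fin m) (Fin m) ℝ)
    (hM : M.PosDef) (v w : Fin m → ℝ) :
    mnorm M⁻¹ w * (Real.sqrt (1 + v ⬝ᵥ M⁻¹ *ᵥ v))⁻¹ ≤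
      mnorm (M + Matrix.vecMulVec v v)⁻¹ w := by
  have hq : 0 ≤ w ⬝ᵥ M⁻¹ *ᵥ w := by simpa using hM.inv.posSemidef.dotProduct_mulVec_nonneg w
  rw [mnorm, mnorm, ← Real.sqrt_inv, ← Real.sqrt_mul hq, ← div_eq_mul_inv]
  exact Real.sqrt_le_sqrt (hM.dotProduct_inv_mulVec_div_le v w)
end

section
/- Let M = [[M₁₁, M₁₂], [M₁₂ᵀ, M₂₂]] be an n×n symmetric M-matrix in block form whose eigenvalues all lie in the interval [λ_min, λ_max] with 0 < λ_min ≤ λ_max, and let κ = λ_max/λ_min. Then for every componentwise positive vector v (of the dimension of M₁₁): ‖M₁₂ᵀM₁₁^{-1}v‖ ≤ κ^{1/2}·n^{1/2}·‖v‖. -/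
/-!
Put `w = M₁₁⁻¹ v` and `x = (w, 0)`, so that `M x = (v, M₁₂ᵀ w)`. Because the spectrum of `M` lies
in `[λ_min, λ_max] ⊆ (0, ∞)`, we have `λ_min ≤ M` and `M² ≤ λ_max M`. The second gives
`‖v‖² + ‖M₁₂ᵀ w‖² = ‖M x‖² ≤ λ_max ⟨x, M x⟩ = λ_max ⟨w, v⟩`; the first gives
`λ_min ‖w‖² ≤ ⟨w, v⟩`, hence `λ_min ⟨w, v⟩ ≤ ‖v‖²` by expanding `‖v - λ_min w‖² ≥ 0`.
Together, `‖M₁₂ᵀ M₁₁⁻¹ v‖² ≤ κ ‖v‖²`, and `n ≥ 1` unless `v = 0`.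
-/

open Matrix

namespace Matrix

variable {n : Type*} [Fintype n]

theorem dotProduct_star_mulVec_star_mulVec {R : Type*} [CommRing R] [StarRing R] [TrivialStar R]
    [DecidableEq n] (U : unitaryGroup n R) (x y : n → R) :
    (star (U : Matrix n n R) *ᵥ x) ⬝ᵥ (star (U : Matrix n n R) *ᵥ y) = x ⬝ᵥ y := by
  have hx : star (U : Matrix n n R) *ᵥ x = x ᵥ* U := by
    rw [star_eq_conjTranspose, conjTranspose_eq_transpose_of_trivial, mulVec_transpose]
  rw [hx, ← dotProduct_mulVec, mulVec_mulVec, Unitary.mul_star_self_of_mem U.2, one_mulVec]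

theorem mul_dotProduct_le_dotProduct_self {a : ℝ} (ha : 0 ≤ a) {v w : n → ℝ}
    (h : a * (w ⬝ᵥ w) ≤ w ⬝ᵥ v) : a * (w ⬝ᵥ v) ≤ v ⬝ᵥ v := by
  have hsq : 0 ≤ (v - a • w) ⬝ᵥ (v - a • w) := dotProduct_self_star_nonneg _
  simp only [sub_dotProduct, dotProduct_sub, smul_dotProduct, dotProduct_smul, smul_eq_mul,
    dotProduct_comm v w] at hsq
  nlinarith

variable [DecidableEq n] {A : Matrix n n ℝ} (hA : A.IsHermitian)

theorem IsHermitian.star_eigenvectorUnitary_mulVec_mulVec (x : n → ℝ) :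
    star (hA.eigenvectorUnitary : Matrix n n ℝ) *ᵥ (A *ᵥ x) =
      hA.eigenvalues * (star (hA.eigenvectorUnitary : Matrix n n ℝ) *ᵥ x) := by
  have h := hA.conjStarAlgAut_star_eigenvectorUnitary
  rw [Unitary.conjStarAlgAut_star_apply] at h
  set U : Matrix n n ℝ := (hA.eigenvectorUnitary : Matrix n n ℝ)
  have hUA : star U * A = diagonal hA.eigenvalues * star U := by
    have hD : diagonal (RCLike.ofReal ∘ hA.eigenvalues) = diagonal hA.eigenvalues := rfl
    rw [← hD, ← h, Matrix.mul_assoc _ U, Unitary.mul_star_self_of_mem hA.eigenvectorUnitary.2,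
      Matrix.mul_one]
  ext i
  rw [mulVec_mulVec, hUA, ← mulVec_mulVec, mulVec_diagonal, Pi.mul_apply]

theorem IsHermitian.mul_dotProduct_self_le_dotProduct_mulVec {a : ℝ}
    (ha : ∀ i, a ≤ hA.eigenvalues i) (x : n → ℝ) : a * (x ⬝ᵥ x) ≤ x ⬝ᵥ (A *ᵥ x) := by
  rw [← dotProduct_star_mulVec_star_mulVec hA.eigenvectorUnitary x,
    ← dotProduct_star_mulVec_star_mulVec hA.eigenvectorUnitary x,
    hA.star_eigenvectorUnitary_mulVec_mulVec]
  set y := star (hA.eigenvectorUnitary : Matrix n n ℝ) *ᵥ x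
  simp only [dotProduct, Pi.mul_apply, Finset.mul_sum]
  exact Finset.sum_le_sum fun i _ => by nlinarith [ha i, mul_self_nonneg (y i)]

theorem IsHermitian.mulVec_dotProduct_mulVec_le {b : ℝ}
    (hb : ∀ i, hA.eigenvalues i ∈ Set.Icc 0 b) (x : n → ℝ) :
    (A *ᵥ x) ⬝ᵥ (A *ᵥ x) ≤ b * (x ⬝ᵥ (A *ᵥ x)) := by
  rw [← dotProduct_star_mulVec_star_mulVec hA.eigenvectorUnitary x,
    ← dotProduct_star_mulVec_star_mulVec hA.eigenvectorUnitary (A *ᵥ x),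
    hA.star_eigenvectorUnitary_mulVec_mulVec]
  set y := star (hA.eigenvectorUnitary : Matrix n n ℝ) *ᵥ x
  simp only [dotProduct, Pi.mul_apply, Finset.mul_sum]
  exact Finset.sum_le_sum fun i _ => by
    nlinarith [mul_nonneg (hb i).1 (sub_nonneg.2 (hb i).2), mul_self_nonneg (y i)]

theorem PosDef.transpose_mulVec_inv_mulVec_dotProduct_self_le {m o : Type*} [Fintype m]
    [Fintype o] [DecidableEq m] [DecidableEq o] {A : Matrix m m ℝ} {B : Matrix m o ℝ}
    {D : Matrix o o ℝ} (hM : (fromBlocks A B Bᵀ D).PosDef) {a b : ℝ} (ha : 0 < a) (hab : a ≤ b)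
    (heig : ∀ i, hM.1.eigenvalues i ∈ Set.Icc a b) (v : m → ℝ) :
    (Bᵀ *ᵥ (A⁻¹ *ᵥ v)) ⬝ᵥ (Bᵀ *ᵥ (A⁻¹ *ᵥ v)) ≤ b / a * (v ⬝ᵥ v) := by
  set w := A⁻¹ *ᵥ v
  set u := Bᵀ *ᵥ w
  have hA : A.PosDef := hM.submatrix Sum.inl_injective
  have hMw : fromBlocks A B Bᵀ D *ᵥ Sum.elim w 0 = Sum.elim v u := by
    simp only [fromBlocks_mulVec, Sum.elim_comp_inl, Sum.elim_comp_inr, mulVec_zero, add_zero]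
    rw [mulVec_mulVec, mul_nonsing_inv _ ((isUnit_iff_isUnit_det _).mp hA.isUnit), one_mulVec]
  have hupper : v ⬝ᵥ v + u ⬝ᵥ u ≤ b * (w ⬝ᵥ v) := by
    simpa only [hMw, sumElim_dotProduct_sumElim, zero_dotProduct, add_zero] using
      hM.1.mulVec_dotProduct_mulVec_le (fun i => ⟨ha.le.trans (heig i).1, (heig i).2⟩)
        (Sum.elim w 0)
  have hlower : a * (w ⬝ᵥ w) ≤ w ⬝ᵥ v := by
    simpa only [hMw, sumElim_dotProduct_sumElim, zero_dotProduct, add_zero] using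
      hM.1.mul_dotProduct_self_le_dotProduct_mulVec (fun i => (heig i).1) (Sum.elim w 0)
  have hwv := mul_dotProduct_le_dotProduct_self ha.le hlower
  have hvv : 0 ≤ v ⬝ᵥ v := dotProduct_self_star_nonneg v
  rw [div_mul_eq_mul_div, le_div_iff₀ ha]
  nlinarith [mul_le_mul_of_nonneg_left hupper ha.le,
    mul_le_mul_of_nonneg_left hwv (ha.le.trans hab), mul_nonneg ha.le hvv]

end Matrix

theorem eucNorm_le_sqrt_mul_eucNorm {ι κ : Type*} [Fintype ι] [Fintype κ] {u : ι → ℝ}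
    {v : κ → ℝ} {c : ℝ} (h : u ⬝ᵥ u ≤ c * (v ⬝ᵥ v)) : eucNorm u ≤ Real.sqrt c * eucNorm v := by
  have hvv : 0 ≤ v ⬝ᵥ v := dotProduct_self_star_nonneg v
  rw [eucNorm, eucNorm, ← Real.sqrt_mul' _ hvv]
  exact Real.sqrt_le_sqrt h

theorem mmatrix_offdiag_bound_general {n₁ n₂ : ℕ}
    (M₁₁ : Matrix (Fin n₁) (Fin n₁) ℝ) (M₁₂ : Matrix (Fin n₁) (Fin n₂) ℝ)
    (M₂₂ : Matrix (Fin n₂) (Fin n₂) ℝ)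
    (hPD : (Matrix.fromBlocks M₁₁ M₁₂ M₁₂ᵀ M₂₂).PosDef)
    (lammin lammax : ℝ) (hlam0 : 0 < lammin) (hlam : lammin ≤ lammax)
    (heig : ∀ i, hPD.1.eigenvalues i ∈ Set.Icc lammin lammax)
    (v : Fin n₁ → ℝ) :
    eucNorm ((M₁₂ᵀ * M₁₁⁻¹) *ᵥ v) ≤
      Real.sqrt (lammax / lammin) * Real.sqrt ((n₁ : ℝ) + n₂) * eucNorm v := by
  have hnorm : eucNorm ((M₁₂ᵀ * M₁₁⁻¹) *ᵥ v) ≤ Real.sqrt (lammax / lammin) * eucNorm v := by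
    rw [← mulVec_mulVec]
    exact eucNorm_le_sqrt_mul_eucNorm
      (hPD.transpose_mulVec_inv_mulVec_dotProduct_self_le hlam0 hlam heig v)
  rcases eq_or_ne v 0 with rfl | hv
  · simp [eucNorm]
  have hn₁ : (1 : ℝ) ≤ n₁ := by
    obtain ⟨i, -⟩ := Function.ne_iff.mp hv
    exact_mod_cast i.pos
  have hdim : 1 ≤ Real.sqrt ((n₁ : ℝ) + n₂) :=
    Real.one_le_sqrt.mpr (by linarith [(Nat.cast_nonneg n₂ : (0 : ℝ) ≤ n₂)])
  calc eucNorm ((M₁₂ᵀ * M₁₁⁻¹) *ᵥ v) ≤ Real.sqrt (lammax / lammin) * eucNorm v := hnorm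
    _ ≤ Real.sqrt (lammax / lammin) * Real.sqrt ((n₁ : ℝ) + n₂) * eucNorm v := by
      rw [mul_right_comm]
      exact le_mul_of_one_le_right (mul_nonneg (Real.sqrt_nonneg _) (Real.sqrt_nonneg _)) hdim

/-- If `M = [[M₁₁, M₁₂], [M₁₂ᵀ, M₂₂]]` is an `n × n` symmetric M-matrix (symmetric positive
definite with nonpositive off-diagonal entries) whose eigenvalues lie in
`[λ_min, λ_max]` with `κ = λ_max / λ_min`, then for every componentwise positive `v`,
`‖M₁₂ᵀ M₁₁⁻¹ v‖ ≤ κ^{1/2} n^{1/2} ‖v‖`. -/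
theorem mmatrix_offdiag_bound {n₁ n₂ : ℕ}
    (M₁₁ : Matrix (Fin n₁) (Fin n₁) ℝ) (M₁₂ : Matrix (Fin n₁) (Fin n₂) ℝ)
    (M₂₂ : Matrix (Fin n₂) (Fin n₂) ℝ)
    (hPD : (Matrix.fromBlocks M₁₁ M₁₂ M₁₂ᵀ M₂₂).PosDef)
    (hoff : ∀ i j : Fin n₁ ⊕ Fin n₂, i ≠ j → Matrix.fromBlocks M₁₁ M₁₂ M₁₂ᵀ M₂₂ i j ≤ 0)
    (lammin lammax : ℝ) (hlam0 : 0 < lammin) (hlam : lammin ≤ lammax)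
    (heig : ∀ i, hPD.1.eigenvalues i ∈ Set.Icc lammin lammax)
    (v : Fin n₁ → ℝ) (hv : ∀ i, 0 < v i) :
    eucNorm ((M₁₂ᵀ * M₁₁⁻¹) *ᵥ v) ≤
      Real.sqrt (lammax / lammin) * Real.sqrt ((n₁ : ℝ) + n₂) * eucNorm v :=
  mmatrix_offdiag_bound_general M₁₁ M₁₂ M₂₂ hPD lammin lammax hlam0 hlam heig v
end
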